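/- arXiv:2510.24661 — 10 statements merged into one kernel-verified Lean document; each statement's English description precedes it below -/
import Mathlib

section
/- (Seidenberg's Lemma) Let K be a field and I ⊆ K[x₁,…,xₙ] a zero-dimensional ideal. Suppose for every i ∈ {1,…,n} there exists a nonzero polynomial f_i ∈ I ∩ K[x_i] such that f_i and its derivative f_i' generate the unit ideal in K[x_i]. Then I is a radical ideal. -/
/-!
Write `A = K[x₁,…,xₙ]/I`. By the chain rule, `0 = d(fᵢ(xᵢ)) = fᵢ'(xᵢ) dxᵢ` in `Ω[A⁄K]`, and
`fᵢ'(xᵢ)` is a unit of `A` because `fᵢ` and `fᵢ'` are coprime while `fᵢ(xᵢ) = 0`. Hence every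
generator `dxᵢ` of `Ω[A⁄K]` vanishes, so `A` is formally unramified over `K`, and an unramified
algebra of finite type over a field is reduced.
-/

open Polynomial

theorem Derivation.map_eq_zero_of_separable_of_aeval_eq_zero {R A M : Type*} [CommRing R]
    [CommRing A] [Algebra R A] [AddCommGroup M] [Module A M] [Module R M] [IsScalarTower R A M]
    (D : Derivation R A M) {f : R[X]} (hf : f.Separable) {x : A} (hx : aeval x f = 0) :
    D x = 0 := by
  have hunit : IsUnit (aeval x (derivative f)) := by
    simpa [hx, isCoprime_zero_left] using IsCoprime.map hf (aeval x).toRingHom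
  have hchain := D.map_aeval f x
  rwa [hx, map_zero, eq_comm, hunit.smul_eq_zero] at hchain

theorem Algebra.FormallyUnramified.of_adjoin_eq_top_of_separable {R A : Type*} [CommRing R]
    [CommRing A] [Algebra R A] {s : Set A} (hs : adjoin R s = ⊤)
    (hsep : ∀ x ∈ s, ∃ f : R[X], f.Separable ∧ aeval x f = 0) :
    Algebra.FormallyUnramified R A := by
  have hD : KaehlerDifferential.D R A = 0 :=
    Derivation.ext_of_adjoin_eq_top s hs fun x hx ↦ by
      obtain ⟨f, hf, hfx⟩ := hsep x hx
      exact Derivation.map_eq_zero_of_separable_of_aeval_eq_zero _ hf hfx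
  refine ⟨(subsingleton_iff_forall_eq 0).mpr fun ω ↦ ?_⟩
  have hspan := KaehlerDifferential.span_range_derivation R A
  rw [hD, Derivation.coe_zero, Set.range_zero, Submodule.span_zero_singleton] at hspan
  exact (Submodule.mem_bot A).mp (hspan ▸ Submodule.mem_top)

theorem Ideal.Quotient.adjoin_image_X_eq_top {R σ : Type*} [CommRing R]
    (I : Ideal (MvPolynomial σ R)) :
    Algebra.adjoin R (Ideal.Quotient.mkₐ R I '' Set.range MvPolynomial.X) = ⊤ := by
  rw [Algebra.adjoin_image, MvPolynomial.adjoin_range_X, Algebra.map_top, AlgHom.range_eq_top]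
  exact Ideal.Quotient.mkₐ_surjective R I

theorem stmt_4_general {K : Type*} [Field K] (n : ℕ) (I : Ideal (MvPolynomial (Fin n) K))
    (hf : ∀ i : Fin n, ∃ f : Polynomial K, f ≠ 0 ∧
      Polynomial.aeval (MvPolynomial.X i : MvPolynomial (Fin n) K) f ∈ I ∧
      IsCoprime f (Polynomial.derivative f)) :
    I.IsRadical := by
  rw [Ideal.isRadical_iff_quotient_reduced]
  have : Algebra.FormallyUnramified K (MvPolynomial (Fin n) K ⧸ I) := by
    refine .of_adjoin_eq_top_of_separable (Ideal.Quotient.adjoin_image_X_eq_top I) ?_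
    rintro _ ⟨_, ⟨i, rfl⟩, rfl⟩
    obtain ⟨f, -, hfI, hsep⟩ := hf i
    refine ⟨f, hsep, ?_⟩
    rwa [aeval_algHom_apply, Ideal.Quotient.mkₐ_eq_mk, Ideal.Quotient.eq_zero_iff_mem]
  have : Algebra.EssFiniteType K (MvPolynomial (Fin n) K ⧸ I) := .of_finiteType _ _
  exact Algebra.FormallyUnramified.isReduced_of_field K _

/-- Seidenberg's Lemma: if `I ⊆ K[x₁,…,xₙ]` is zero-dimensional and for each variable
`xᵢ` the ideal contains a nonzero univariate polynomial `fᵢ(xᵢ)` with `fᵢ` coprime to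
its derivative, then `I` is radical. -/
theorem stmt_4 {K : Type*} [Field K] (n : ℕ) (I : Ideal (MvPolynomial (Fin n) K))
    (hdim : Module.Finite K (MvPolynomial (Fin n) K ⧸ I))
    (hf : ∀ i : Fin n, ∃ f : Polynomial K, f ≠ 0 ∧
      Polynomial.aeval (MvPolynomial.X i : MvPolynomial (Fin n) K) f ∈ I ∧
      IsCoprime f (Polynomial.derivative f)) :
    I.IsRadical :=
  stmt_4_general n I hf
end

section
/- Let K be a field and I ⊆ K[x₁,…,xₙ] a primary ideal. Then the collection of subsets J ⊆ {1,…,n} satisfying I ∩ K[x_j : j ∈ J] = {0} forms the independent sets of a matroid; in particular all maximal such subsets have the same cardinality. -/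
/-!
Since `√I` is prime, `A = K[X]/√I` is a domain, and because `K[X]` is reduced, `I` meets
`K[x_j : j ∈ J]` only in `0` iff `√I` does, i.e. iff the images of the `x_j` in `A` are
algebraically independent over `K`. So these sets are the independent sets of the algebraic
matroid of `A/K` pulled back along `i ↦ x̄ᵢ`, and the maximal ones are its bases.
-/

open MvPolynomial

theorem Ideal.forall_mem_radical_eq_zero_iff {R S : Type*} [CommSemiring R] [IsReduced R]
    [SetLike S R] [SubmonoidClass S R] (I : Ideal R) (s : S) :
    (∀ f ∈ I.radical, f ∈ s → f = 0) ↔ ∀ f ∈ I, f ∈ s → f = 0 := by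
  refine ⟨fun h f hf ↦ h f (I.le_radical hf), fun h f ⟨m, hfm⟩ hfs ↦ ?_⟩
  exact IsNilpotent.eq_zero ⟨m, h _ hfm (pow_mem hfs m)⟩

theorem MvPolynomial.algebraicIndepOn_iff_forall_mem_ker_aeval {R A σ : Type*} [CommRing R]
    [CommRing A] [Algebra R A] (x : σ → A) (J : Set σ) :
    AlgebraicIndepOn R x J ↔ ∀ f ∈ RingHom.ker (aeval x), f ∈ supported R J → f = 0 := by
  have hrename (p : MvPolynomial J R) :
      aeval x (rename Subtype.val p) = aeval (fun i : J ↦ x i) p :=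
    aeval_rename ..
  rw [AlgebraicIndepOn, algebraicIndependent_iff, supported_eq_range_rename]
  constructor
  · rintro h _ hf ⟨p, rfl⟩
    rw [h p ((hrename p).symm.trans hf), map_zero]
  · refine fun h p hp ↦ rename_injective _ Subtype.val_injective ?_
    rw [map_zero]
    exact h _ ((hrename p).trans hp) ⟨p, rfl⟩

theorem MvPolynomial.ker_aeval_quotientMk {R σ : Type*} [CommRing R]
    (P : Ideal (MvPolynomial σ R)) :
    RingHom.ker (aeval fun i ↦ Ideal.Quotient.mk P (X i)) = P := by
  have : aeval (fun i ↦ Ideal.Quotient.mk P (X i)) = Ideal.Quotient.mkₐ R P :=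
    algHom_ext fun _ ↦ by simp
  rw [this, ← RingHom.ker_coe_toRingHom, Ideal.Quotient.mkₐ_ker]

theorem AlgebraicIndependent.comap_matroid_indep_iff {R A ι : Type*} [CommRing R] [CommRing A]
    [Nontrivial R] [Algebra R A] [FaithfulSMul R A] [NoZeroDivisors A] (x : ι → A) (s : Set ι) :
    ((matroid R A).comap x).Indep s ↔ AlgebraicIndepOn R x s := by
  refine ⟨fun ⟨hind, hinj⟩ ↦ (algebraicIndependent_image hinj).mpr hind, fun h ↦ ?_⟩
  have hinj : s.InjOn x := Set.injOn_iff_injective.mpr h.injective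
  exact ⟨(algebraicIndependent_image hinj).mp h, hinj⟩

/-- For a primary ideal `I ⊆ K[x₁,…,xₙ]`, the sets `J ⊆ {1,…,n}` of variables with
`I ∩ K[x_j : j ∈ J] = {0}` are the independent sets of a matroid; in particular all
maximal such sets have the same cardinality. -/
theorem stmt_5 {K : Type*} [Field K] (n : ℕ) (I : Ideal (MvPolynomial (Fin n) K))
    (hI : I.IsPrimary) :
    ∃ M : Matroid (Fin n), M.E = Set.univ ∧
      (∀ J : Set (Fin n),
        M.Indep J ↔ ∀ f ∈ I, f ∈ MvPolynomial.supported K J → f = 0) ∧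
      (∀ J₁ J₂ : Set (Fin n),
        Maximal (fun J : Set (Fin n) => ∀ f ∈ I, f ∈ MvPolynomial.supported K J → f = 0) J₁ →
        Maximal (fun J : Set (Fin n) => ∀ f ∈ I, f ∈ MvPolynomial.supported K J → f = 0) J₂ →
        J₁.ncard = J₂.ncard) := by
  have := Ideal.isPrime_radical hI
  set M := (AlgebraicIndependent.matroid K (MvPolynomial (Fin n) K ⧸ I.radical)).comap
    fun i ↦ Ideal.Quotient.mk I.radical (X i)
  have hM : ∀ J, M.Indep J ↔ ∀ f ∈ I, f ∈ supported K J → f = 0 := fun J ↦ by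
    rw [AlgebraicIndependent.comap_matroid_indep_iff, algebraicIndepOn_iff_forall_mem_ker_aeval,
      ker_aeval_quotientMk, Ideal.forall_mem_radical_eq_zero_iff]
  refine ⟨M, rfl, hM, fun J₁ J₂ h₁ h₂ ↦ ?_⟩
  simp_rw [← hM, ← Matroid.isBase_iff_maximal_indep] at h₁ h₂
  exact h₁.ncard_eq_ncard_of_isBase h₂
end

section
/- Let K be an algebraically closed field, G a group acting linearly on Kⁿ, I ⊆ K[x₁,…,xₙ] a G-invariant ideal whose variety V = V(I) is G-transitive and connected in the Euclidean (or Zariski) topology. Then K[X]/I has a unique associated prime, i.e., I is a primary ideal. -/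
/-!
Let `Q` be a minimal associated prime of `K[X]/I`. For every other associated prime `P` we have
`P ≰ Q`, so by the Nullstellensatz the irreducible set `V(Q)` is not covered by the finitely many
`V(P)`: some `x₀ ∈ V(Q)` lies on no other `V(P)`. The group permutes the associated primes and moves
`x₀` to every point of `V`, so every point of `V` lies on exactly one `V(P)`. Hence `V` is the
disjoint union of the closed sets `V(P)`, and connectedness leaves only `V(Q)`: `Q` is the only
associated prime, so `I` is primary.
-/

open MvPolynomial

theorem comap_mem_associatedPrimes_quotient {R S : Type*} [CommRing R] [CommRing S]
    (e : R ≃+* S) {J P : Ideal S} (hP : P ∈ associatedPrimes S (S ⧸ J)) :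
    P.comap e ∈ associatedPrimes R (R ⧸ J.comap e) := by
  obtain ⟨hprime, x, rfl⟩ := hP
  obtain ⟨s, rfl⟩ := Ideal.Quotient.mk_surjective x
  refine ⟨hprime.comap e, Ideal.Quotient.mk _ (e.symm s), ?_⟩
  rw [Ideal.comap_radical]
  congr 1
  ext r
  rw [Ideal.mem_comap]
  simp only [Submodule.mem_colon_singleton, Submodule.mem_bot, Algebra.smul_def,
    Ideal.Quotient.algebraMap_eq, ← map_mul, Ideal.Quotient.eq_zero_iff_mem]
  rw [Ideal.mem_comap, map_mul, RingEquiv.apply_symm_apply]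

theorem Ideal.isPrimary_of_associatedPrimes_eq_singleton {R : Type*} [CommRing R]
    [IsNoetherianRing R] {I P : Ideal R} (h : associatedPrimes R (R ⧸ I) = {P}) :
    I.IsPrimary := by
  have hI : I ≠ ⊤ := by
    rintro rfl
    simp [associatedPrimes.eq_empty_of_subsingleton] at h
  have hrad : I.radical = P := by
    have hmin : I.minimalPrimes ⊆ {P} := by
      simpa [Ideal.annihilator_quotient, h] using
        Module.associatedPrimes.minimalPrimes_annihilator_subset_associatedPrimes R (R ⧸ I)
    obtain ⟨Q, hQ⟩ := Ideal.nonempty_minimalPrimes hI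
    rw [← Ideal.sInf_minimalPrimes, (Set.Nonempty.subset_singleton_iff ⟨Q, hQ⟩).mp hmin,
      sInf_singleton]
  refine Ideal.isPrimary_iff.mpr ⟨hI, fun {a b} hab => or_iff_not_imp_left.mpr fun ha => ?_⟩
  have hb : b ∈ ⋃ p ∈ associatedPrimes R (R ⧸ I), p := by
    rw [biUnion_associatedPrimes_eq_zero_divisors]
    refine ⟨Ideal.Quotient.mk I a, ?_, ?_⟩
    · rwa [Ne, Ideal.Quotient.eq_zero_iff_mem]
    · rw [Algebra.smul_def, Ideal.Quotient.algebraMap_eq, ← map_mul, mul_comm,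
        Ideal.Quotient.eq_zero_iff_mem]
      exact hab
  simpa [h, hrad] using hb

theorem Ideal.comap_eq_self_of_forall_mem {R A G : Type*} [CommSemiring R] [Semiring A]
    [Algebra R A] [Group G] (τ : G →* (A ≃ₐ[R] A)) {I : Ideal A} (hI : ∀ g, ∀ f ∈ I, τ g f ∈ I)
    (g : G) : I.comap (τ g) = I :=
  le_antisymm (fun f hf => by simpa [← AlgEquiv.mul_apply, ← map_mul] using hI g⁻¹ _ hf)
    (fun f hf => hI g f hf)

theorem comap_mem_associatedPrimes_of_forall_mem {R A G : Type*} [CommSemiring R] [CommRing A]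
    [Algebra R A] [Group G] (τ : G →* (A ≃ₐ[R] A)) {I P : Ideal A}
    (hI : ∀ g, ∀ f ∈ I, τ g f ∈ I) (g : G) (hP : P ∈ associatedPrimes A (A ⧸ I)) :
    P.comap (τ g) ∈ associatedPrimes A (A ⧸ I) := by
  have := comap_mem_associatedPrimes_quotient (τ g).toRingEquiv hP
  rwa [show I.comap (τ g).toRingEquiv = I from Ideal.comap_eq_self_of_forall_mem τ hI g] at this

theorem le_of_mem_associatedPrimes_quotient {R : Type*} [CommRing R] {I P : Ideal R}
    (hP : P ∈ associatedPrimes R (R ⧸ I)) : I ≤ P := by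
  simpa [Submodule.annihilator_top, Ideal.annihilator_quotient] using hP.annihilator_le

namespace MvPolynomial

variable {K σ : Type*}

section LinearPullback

variable [Fintype σ] [DecidableEq σ]

noncomputable def linearPullback [CommSemiring K] (L : (σ → K) →ₗ[K] (σ → K)) :
    MvPolynomial σ K →ₐ[K] MvPolynomial σ K :=
  aeval fun i => ∑ j, C (L (Pi.single j 1) i) * X j

theorem eval_linearPullback [CommSemiring K] (L : (σ → K) →ₗ[K] (σ → K)) (x : σ → K)
    (f : MvPolynomial σ K) : eval x (linearPullback L f) = eval (L x) f := by
  rw [linearPullback, aeval_eq_bind₁, ← aeval_eq_eval, aeval_bind₁, aeval_eq_eval]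
  congr
  ext i
  conv_rhs => rw [pi_eq_sum_univ' x]
  simp [Finset.sum_apply, mul_comm]

variable [Field K] [Infinite K]

noncomputable def linearPullbackEquiv (e : (σ → K) ≃ₗ[K] (σ → K)) :
    MvPolynomial σ K ≃ₐ[K] MvPolynomial σ K :=
  AlgEquiv.ofAlgHom (linearPullback e) (linearPullback e.symm)
    (AlgHom.ext fun f => funext fun x => by simp [eval_linearPullback])
    (AlgHom.ext fun f => funext fun x => by simp [eval_linearPullback])

@[simp]
theorem eval_linearPullbackEquiv (e : (σ → K) ≃ₗ[K] (σ → K)) (x : σ → K)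
    (f : MvPolynomial σ K) : eval x (linearPullbackEquiv e f) = eval (e x) f :=
  eval_linearPullback _ x f

/-- `g` acts on polynomial functions by `(g • f) x = f (g⁻¹ x)`. -/
noncomputable def pullbackAction {G : Type*} [Group G] (ρ : G →* ((σ → K) ≃ₗ[K] (σ → K))) :
    G →* (MvPolynomial σ K ≃ₐ[K] MvPolynomial σ K) where
  toFun g := linearPullbackEquiv (ρ g)⁻¹
  map_one' := AlgEquiv.ext fun f => funext fun x => by simp
  map_mul' g h := AlgEquiv.ext fun f => funext fun x => by simp [AlgEquiv.mul_apply]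

theorem mem_zeroLocus_comap_pullbackAction {G : Type*} [Group G]
    (ρ : G →* ((σ → K) ≃ₗ[K] (σ → K))) (g : G) (J : Ideal (MvPolynomial σ K)) (x : σ → K) :
    x ∈ zeroLocus K (J.comap (pullbackAction ρ g)) ↔ ρ g x ∈ zeroLocus K J := by
  have key (p : MvPolynomial σ K) : eval x ((pullbackAction ρ g).symm p) = eval (ρ g x) p := by
    rw [← AlgEquiv.aut_inv, ← map_inv]
    simp [pullbackAction]
  rw [mem_zeroLocus_iff, (pullbackAction ρ g).symm.surjective.forall]
  simp only [Ideal.mem_comap, AlgEquiv.apply_symm_apply, aeval_eq_eval, key, mem_zeroLocus_iff]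

end LinearPullback

variable [Field K]

theorem zeroLocus_finset_inf {ι : Type*} (s : Finset ι) (J : ι → Ideal (MvPolynomial σ K)) :
    zeroLocus K (s.inf J) = ⋃ i ∈ s, zeroLocus K (J i) := by
  ext x
  have hpt (J : Ideal (MvPolynomial σ K)) : x ∈ zeroLocus K J ↔ J ≤ vanishingIdeal K {x} :=
    Set.singleton_subset_iff.symm.trans le_zeroLocus_iff_le_vanishingIdeal
  simp only [hpt, Set.mem_iUnion, exists_prop]
  exact Ideal.IsPrime.inf_le' inferInstance

def IsZariskiConnected (V : Set (σ → K)) : Prop :=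
  ∀ I₁ I₂ : Ideal (MvPolynomial σ K),
    V = (zeroLocus K I₁ ∩ V) ∪ (zeroLocus K I₂ ∩ V) →
    zeroLocus K I₁ ∩ zeroLocus K I₂ ∩ V = ∅ → zeroLocus K I₁ ∩ V = ∅ ∨ zeroLocus K I₂ ∩ V = ∅

theorem IsZariskiConnected.eq_singleton {V : Set (σ → K)} (hV : IsZariskiConnected V)
    {A : Set (Ideal (MvPolynomial σ K))} (hA : A.Finite) {Q : Ideal (MvPolynomial σ K)}
    (hQ : Q ∈ A) (hne : ∀ P ∈ A, (zeroLocus K P ∩ V).Nonempty)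
    (hcover : ∀ x ∈ V, ∃ P ∈ A, x ∈ zeroLocus K P)
    (hunique : ∀ x ∈ V, ∀ P ∈ A, ∀ P' ∈ A, x ∈ zeroLocus K P → x ∈ zeroLocus K P' → P = P') :
    A = {Q} := by
  classical
  set rest := hA.toFinset.erase Q
  have hrest : ∀ x, x ∈ zeroLocus K (rest.inf id) ↔ ∃ P ∈ A, P ≠ Q ∧ x ∈ zeroLocus K P := by
    intro x
    simp only [rest, zeroLocus_finset_inf, Set.mem_iUnion, exists_prop, Finset.mem_erase,
      Set.Finite.mem_toFinset, id, and_assoc, and_left_comm (a := _ ∈ A)]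
  have hsplit : V = (zeroLocus K Q ∩ V) ∪ (zeroLocus K (rest.inf id) ∩ V) := by
    refine (Set.union_subset Set.inter_subset_right Set.inter_subset_right).antisymm' ?_
    intro x hx
    obtain ⟨P, hP, hxP⟩ := hcover x hx
    by_cases hPQ : P = Q
    · exact Or.inl ⟨hPQ ▸ hxP, hx⟩
    · exact Or.inr ⟨(hrest x).mpr ⟨P, hP, hPQ, hxP⟩, hx⟩
  have hdisj : zeroLocus K Q ∩ zeroLocus K (rest.inf id) ∩ V = ∅ := by
    refine Set.eq_empty_of_forall_notMem fun x ⟨⟨hxQ, hx⟩, hxV⟩ => ?_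
    obtain ⟨P, hP, hPQ, hxP⟩ := (hrest x).mp hx
    exact hPQ (hunique x hxV P hP Q hQ hxP hxQ)
  refine Set.eq_singleton_iff_unique_mem.mpr ⟨hQ, fun P hP => by_contra fun hPQ => ?_⟩
  rcases hV Q (rest.inf id) hsplit hdisj with h | h
  · exact (hne Q hQ).ne_empty h
  · obtain ⟨x, hxP, hxV⟩ := hne P hP
    exact h.subset ⟨(hrest x).mpr ⟨P, hP, hPQ, hxP⟩, hxV⟩

variable [IsAlgClosed K] [Finite σ]

theorem zeroLocus_nonempty {J : Ideal (MvPolynomial σ K)} (hJ : J ≠ ⊤) :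
    (zeroLocus K J).Nonempty := by
  refine Set.nonempty_iff_ne_empty.mpr fun h => hJ ?_
  rw [← Ideal.radical_eq_top, ← vanishingIdeal_zeroLocus_eq_radical (K := K), h,
    vanishingIdeal_empty]

theorem exists_le_of_zeroLocus_subset_biUnion {ι : Type*} {P : Ideal (MvPolynomial σ K)}
    [P.IsPrime] {s : Finset ι} {J : ι → Ideal (MvPolynomial σ K)}
    (h : zeroLocus K P ⊆ ⋃ i ∈ s, zeroLocus K (J i)) : ∃ i ∈ s, J i ≤ P := by
  rw [← zeroLocus_finset_inf] at h
  have hle := le_zeroLocus_iff_le_vanishingIdeal.mp h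
  rw [IsPrime.vanishingIdeal_zeroLocus] at hle
  exact (Ideal.IsPrime.inf_le' ‹_›).mp hle

theorem exists_mem_zeroLocus_forall_eq_of_minimal {A : Set (Ideal (MvPolynomial σ K))}
    (hA : A.Finite) {Q : Ideal (MvPolynomial σ K)} [Q.IsPrime] (hQ : Minimal (· ∈ A) Q) :
    ∃ x ∈ zeroLocus K Q, ∀ P ∈ A, x ∈ zeroLocus K P → P = Q := by
  classical
  by_contra! h
  obtain ⟨P, hP, hPQ⟩ := exists_le_of_zeroLocus_subset_biUnion (s := hA.toFinset.erase Q) (J := id)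
    fun x hx => by
      obtain ⟨P, hP, hxP, hPQ⟩ := h x hx
      exact Set.mem_biUnion (Finset.mem_erase.mpr ⟨hPQ, hA.mem_toFinset.mpr hP⟩) hxP
  obtain ⟨hne, hP⟩ := Finset.mem_erase.mp hP
  exact hne (hQ.eq_of_le (hA.mem_toFinset.mp hP) hPQ)

end MvPolynomial

/-- Let `K` be algebraically closed, `G` a group acting linearly on `Kⁿ`,
`I` a `G`-invariant ideal whose variety `V = V(I)` is `G`-transitive and connected
(in the Zariski topology). Then `I` is primary (equivalently, `K[X]/I` has a unique
associated prime). -/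
theorem stmt_10 {K : Type*} [Field K] [IsAlgClosed K] (n : ℕ)
    {G : Type*} [Group G] (ρ : G →* ((Fin n → K) ≃ₗ[K] (Fin n → K)))
    (I : Ideal (MvPolynomial (Fin n) K))
    (hinvI : ∀ g : G, ∀ f ∈ I,
      MvPolynomial.aeval (fun i : Fin n =>
        ∑ j : Fin n, MvPolynomial.C ((ρ g)⁻¹ (Pi.single j (1 : K)) i) *
          MvPolynomial.X j) f ∈ I)
    (V : Set (Fin n → K)) (hV : V = MvPolynomial.zeroLocus K I) (hne : V.Nonempty)
    (htrans : ∀ x ∈ V, ∀ y ∈ V, ∃ g : G, ρ g x = y)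
    (hconn : ∀ I₁ I₂ : Ideal (MvPolynomial (Fin n) K),
      V = (MvPolynomial.zeroLocus K I₁ ∩ V) ∪ (MvPolynomial.zeroLocus K I₂ ∩ V) →
      MvPolynomial.zeroLocus K I₁ ∩ MvPolynomial.zeroLocus K I₂ ∩ V = ∅ →
      MvPolynomial.zeroLocus K I₁ ∩ V = ∅ ∨ MvPolynomial.zeroLocus K I₂ ∩ V = ∅) :
    I.IsPrimary := by
  subst hV
  set A := associatedPrimes (MvPolynomial (Fin n) K) (MvPolynomial (Fin n) K ⧸ I)
  have hAτ (g : G) (P : Ideal _) (hP : P ∈ A) : P.comap (pullbackAction ρ g) ∈ A :=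
    comap_mem_associatedPrimes_of_forall_mem (pullbackAction ρ) hinvI g hP
  have hAV (P : Ideal _) (hP : P ∈ A) : zeroLocus K P ⊆ zeroLocus K I :=
    zeroLocus_anti_mono (le_of_mem_associatedPrimes_quotient hP)
  have : Nontrivial (MvPolynomial (Fin n) K ⧸ I) :=
    Ideal.Quotient.nontrivial_iff.mpr fun h => by simp [h] at hne
  have hA : A.Finite := associatedPrimes.finite _ _
  obtain ⟨Q, hQ⟩ := hA.exists_minimal (associatedPrimes.nonempty _ _)
  have := hQ.prop.isPrime
  obtain ⟨x₀, hx₀Q, hx₀⟩ := exists_mem_zeroLocus_forall_eq_of_minimal hA hQ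
  have hx₀V := hAV Q hQ.prop hx₀Q
  refine Ideal.isPrimary_of_associatedPrimes_eq_singleton
    (IsZariskiConnected.eq_singleton hconn hA hQ.prop ?_ ?_ ?_)
  · intro P hP
    obtain ⟨x, hx⟩ := zeroLocus_nonempty (K := K) hP.isPrime.ne_top
    exact ⟨x, hx, hAV P hP hx⟩
  · intro y hy
    obtain ⟨g, hg⟩ := htrans y hy x₀ hx₀V
    exact ⟨_, hAτ g Q hQ.prop, (mem_zeroLocus_comap_pullbackAction ρ g Q y).mpr (hg ▸ hx₀Q)⟩
  · intro y hy P hP P' hP' hyP hyP'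
    obtain ⟨g, rfl⟩ := htrans x₀ hx₀V y hy
    refine Ideal.comap_injective_of_surjective _ (pullbackAction ρ g).surjective ?_
    rw [hx₀ _ (hAτ g P hP) ((mem_zeroLocus_comap_pullbackAction ρ g P x₀).mpr hyP),
      hx₀ _ (hAτ g P' hP') ((mem_zeroLocus_comap_pullbackAction ρ g P' x₀).mpr hyP')]
end

section
/- Let S = {(a,b) ∈ [n₁]×⋯×[n_d] squared : there exist i, j with a_i > b_i and a_j < b_j}, and let I₀ ⊆ ℝ[x_a : a ∈ [n₁]×⋯×[n_d]] be the ideal generated by the binomials x_a x_b − x_{a∨b} x_{a∧b} for (a,b) ∈ S, where a∨b and a∧b are the componentwise max and min. If f₁² + ⋯ + f_l² ∈ I₀ for polynomials f_i ∈ ℝ[X], then f_i ∈ I₀ for every i. -/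
open MvPolynomial

namespace Stmt11Aux

variable {d : ℕ} {n : Fin d → ℕ}

abbrev Pt (d : ℕ) (n : Fin d → ℕ) := (i : Fin d) → Fin (n i)
abbrev Tgt (d : ℕ) (n : Fin d → ℕ) := Option ((i : Fin d) × Fin (n i))

noncomputable def φ (d : ℕ) (n : Fin d → ℕ) :
    MvPolynomial (Pt d n) ℝ →ₐ[ℝ] MvPolynomial (Tgt d n) ℝ :=
  aeval (fun a => X none * ∏ i, X (some ⟨i, a i⟩))

noncomputable def e (a : Pt d n) : Tgt d n →₀ ℕ :=
  Finsupp.single none 1 + ∑ i, Finsupp.single (some ⟨i, a i⟩) 1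

lemma phi_X (a : Pt d n) : φ d n (X a) = monomial (e a) 1 := by
  rw [φ, aeval_X, e]
  rw [show ((monomial (Finsupp.single (none : Tgt d n) 1 +
      ∑ i, Finsupp.single (some ⟨i, a i⟩) 1)) (1:ℝ)) =
      monomial (Finsupp.single none 1) 1 * monomial (∑ i, Finsupp.single (some ⟨i, a i⟩) 1) 1 by
    rw [monomial_mul, one_mul]]
  rw [monomial_sum_one]
  rfl

end Stmt11Aux

namespace Stmt11Aux2
open Stmt11Aux
variable {d : ℕ} {n : Fin d → ℕ}

noncomputable def P (s : Multiset (Pt d n)) : MvPolynomial (Pt d n) ℝ := (s.map X).prod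
noncomputable def E (s : Multiset (Pt d n)) : Tgt d n →₀ ℕ := (s.map e).sum

@[simp] lemma P_zero : P (0 : Multiset (Pt d n)) = 1 := rfl
@[simp] lemma P_cons (a : Pt d n) (s : Multiset (Pt d n)) : P (a ::ₘ s) = X a * P s := by
  simp [P]
@[simp] lemma E_zero : E (0 : Multiset (Pt d n)) = 0 := rfl
@[simp] lemma E_cons (a : Pt d n) (s : Multiset (Pt d n)) : E (a ::ₘ s) = e a + E s := by
  simp [E]

lemma phi_P (s : Multiset (Pt d n)) : φ d n (P s) = monomial (E s) 1 := by
  induction s using Multiset.induction with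
  | empty => simp [φ]
  | cons a s ih =>
    rw [P_cons, E_cons, map_mul, phi_X, ih, monomial_mul, one_mul]

end Stmt11Aux2

namespace Stmt11Aux3
open Stmt11Aux Stmt11Aux2
variable {d : ℕ} {n : Fin d → ℕ}

lemma e_sup_inf (a b : Pt d n) : e (a ⊔ b) + e (a ⊓ b) = e a + e b := by
  unfold e
  have : ∀ i : Fin d,
      Finsupp.single (some ⟨i, (a ⊔ b) i⟩ : Tgt d n) 1 + Finsupp.single (some ⟨i, (a ⊓ b) i⟩) 1
      = Finsupp.single (some ⟨i, a i⟩) 1 + Finsupp.single (some ⟨i, b i⟩) 1 := by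
    intro i
    rw [Pi.sup_apply, Pi.inf_apply]
    rcases le_total (a i) (b i) with h | h
    · rw [sup_eq_right.mpr h, inf_eq_left.mpr h, add_comm]
    · rw [sup_eq_left.mpr h, inf_eq_right.mpr h]
  have h2 : (∑ i, Finsupp.single (some ⟨i, (a ⊔ b) i⟩ : Tgt d n) 1)
      + (∑ i, Finsupp.single (some ⟨i, (a ⊓ b) i⟩ : Tgt d n) 1)
      = (∑ i, Finsupp.single (some ⟨i, a i⟩ : Tgt d n) 1)
      + (∑ i, Finsupp.single (some ⟨i, b i⟩ : Tgt d n) 1) := by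
    rw [← Finset.sum_add_distrib, ← Finset.sum_add_distrib]
    exact Finset.sum_congr rfl fun i _ => this i
  abel_nf
  abel_nf at h2
  rw [h2]

end Stmt11Aux3

namespace Stmt11Aux4
open Stmt11Aux Stmt11Aux2 Stmt11Aux3
variable {d : ℕ} {n : Fin d → ℕ}

def G (d : ℕ) (n : Fin d → ℕ) : Set (MvPolynomial (Pt d n) ℝ) :=
  {p | ∃ a b : Pt d n, (∃ i, b i < a i) ∧ (∃ j, a j < b j) ∧
      p = X a * X b - X (a ⊔ b) * X (a ⊓ b)}

lemma span_G_le_ker : Ideal.span (G d n) ≤ RingHom.ker (φ d n).toRingHom := by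
  rw [Ideal.span_le]
  rintro p ⟨a, b, -, -, rfl⟩
  simp only [SetLike.mem_coe, RingHom.mem_ker, AlgHom.toRingHom_eq_coe, RingHom.coe_coe,
    map_sub, map_mul, phi_X, monomial_mul, one_mul]
  rw [e_sup_inf, add_comm (e a) (e b), sub_self]

end Stmt11Aux4

namespace Stmt11Aux5
open Stmt11Aux Stmt11Aux2 Stmt11Aux3
variable {d : ℕ} {n : Fin d → ℕ}

def Ch (s : Multiset (Pt d n)) : Prop := ∀ a ∈ s, ∀ b ∈ s, a ≤ b ∨ b ≤ a

lemma ch_of_le {s t : Multiset (Pt d n)} (h : s ≤ t) (ht : Ch t) : Ch s :=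
  fun a ha b hb => ht a (Multiset.mem_of_le h ha) b (Multiset.mem_of_le h hb)

lemma exists_max : ∀ (s : Multiset (Pt d n)), Ch s → s ≠ 0 → ∃ a ∈ s, ∀ b ∈ s, b ≤ a := by
  intro s
  induction s using Multiset.induction with
  | empty => intro _ h; exact absurd rfl h
  | cons c s ih =>
    intro hch _
    rcases eq_or_ne s 0 with rfl | hs0
    · exact ⟨c, Multiset.mem_cons_self c 0, by simp⟩
    · obtain ⟨m, hm, hmax⟩ := ih (ch_of_le (Multiset.le_cons_self s c) hch) hs0
      rcases hch c (Multiset.mem_cons_self c s) m (Multiset.mem_cons_of_mem hm) with h | h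
      · exact ⟨m, Multiset.mem_cons_of_mem hm, by
          intro b hb
          rcases Multiset.mem_cons.mp hb with rfl | hb
          · exact h
          · exact hmax b hb⟩
      · exact ⟨c, Multiset.mem_cons_self c s, by
          intro b hb
          rcases Multiset.mem_cons.mp hb with rfl | hb
          · exact le_refl b
          · exact (hmax b hb).trans h⟩

lemma erase_map_eq {s : Multiset (Pt d n)} {a : Pt d n} (ha : a ∈ s) (f : Pt d n → α)
    [DecidableEq α] : (s.erase a).map f = (s.map f).erase (f a) := by
  have h1 : s.map f = f a ::ₘ (s.erase a).map f := by
    conv_lhs => rw [← Multiset.cons_erase ha]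
    rw [Multiset.map_cons]
  rw [h1, Multiset.erase_cons_head]

lemma chain_unique : ∀ (N : ℕ) (s t : Multiset (Pt d n)), Multiset.card s = N → Ch s → Ch t →
    Multiset.card s = Multiset.card t → (∀ i, s.map (· i) = t.map (· i)) → s = t := by
  intro N
  induction N with
  | zero =>
    intro s t hN _ _ hcard _
    rw [Multiset.card_eq_zero.mp hN] at hcard ⊢
    exact (Multiset.card_eq_zero.mp hcard.symm).symm
  | succ N ih =>
    intro s t hN hs ht hcard hmap
    have hs0 : s ≠ 0 := by intro h; rw [h] at hN; simp at hN
    have ht0 : t ≠ 0 := by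
      intro h; rw [h] at hcard; rw [Multiset.card_zero] at hcard
      rw [Multiset.card_eq_zero.mp hcard] at hN; simp at hN
    obtain ⟨a, has, hamax⟩ := exists_max s hs hs0
    obtain ⟨b, hbt, hbmax⟩ := exists_max t ht ht0
    have hab : a = b := by
      funext i
      have h1 : a i ∈ t.map (· i) := by rw [← hmap i]; exact Multiset.mem_map_of_mem _ has
      have h2 : b i ∈ s.map (· i) := by rw [hmap i]; exact Multiset.mem_map_of_mem _ hbt
      obtain ⟨c, hcs, hc⟩ := Multiset.mem_map.mp h2
      obtain ⟨c', hct, hc'⟩ := Multiset.mem_map.mp h1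
      exact le_antisymm (hc' ▸ hbmax c' hct i) (hc ▸ hamax c hcs i)
    subst hab
    have key : s.erase a = t.erase a := by
      refine ih (s.erase a) (t.erase a) ?_ (ch_of_le (Multiset.erase_le a s) hs)
        (ch_of_le (Multiset.erase_le a t) ht) ?_ ?_
      · rw [Multiset.card_erase_of_mem has, hN]; rfl
      · rw [Multiset.card_erase_of_mem has, Multiset.card_erase_of_mem hbt, hcard]
      · intro i
        rw [erase_map_eq has, erase_map_eq hbt, hmap i]
    calc s = a ::ₘ s.erase a := (Multiset.cons_erase has).symm
    _ = a ::ₘ t.erase a := by rw [key]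
    _ = t := Multiset.cons_erase hbt

end Stmt11Aux5

namespace Stmt11Aux6
open Stmt11Aux Stmt11Aux2 Stmt11Aux3 Stmt11Aux5
variable {d : ℕ} {n : Fin d → ℕ}

lemma e_none (a : Pt d n) : e a none = 1 := by
  simp [e, Finsupp.single_apply]

lemma e_some (a : Pt d n) (i : Fin d) (v : Fin (n i)) :
    e a (some ⟨i, v⟩) = if v = a i then 1 else 0 := by
  simp only [e, Finsupp.add_apply, Finsupp.single_apply, Finsupp.finset_sum_apply]
  rw [if_neg (by simp)]
  rw [zero_add, Finset.sum_eq_single i]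
  · simp only [Option.some.injEq, Sigma.mk.inj_iff, heq_eq_eq, true_and]
    by_cases h : v = a i
    · rw [if_pos h.symm, if_pos h]
    · rw [if_neg (Ne.symm h), if_neg h]
  · intro j _ hj
    rw [if_neg]
    simp only [Option.some.injEq, Sigma.mk.inj_iff]
    exact fun h => hj h.1
  · intro h; exact absurd (Finset.mem_univ i) h

lemma E_none (s : Multiset (Pt d n)) : E s none = Multiset.card s := by
  induction s using Multiset.induction with
  | empty => simp
  | cons a s ih => simp [Finsupp.add_apply, e_none, ih]; omega

lemma E_some (s : Multiset (Pt d n)) (i : Fin d) (v : Fin (n i)) :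
    E s (some ⟨i, v⟩) = Multiset.count v (s.map (· i)) := by
  induction s using Multiset.induction with
  | empty => simp
  | cons a s ih =>
    rw [E_cons, Finsupp.add_apply, e_some a i v, ih, Multiset.map_cons]
    by_cases h : v = a i
    · subst h; rw [Multiset.count_cons_self, if_pos rfl, add_comm]
    · rw [Multiset.count_cons_of_ne h, if_neg h, zero_add]

lemma E_inj_of_ch {s t : Multiset (Pt d n)} (hs : Ch s) (ht : Ch t) (h : E s = E t) : s = t := by
  have hcard : Multiset.card s = Multiset.card t := by
    rw [← E_none, ← E_none, h]
  refine chain_unique (Multiset.card s) s t rfl hs ht hcard fun i => ?_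
  ext v
  rw [← E_some, ← E_some, h]

end Stmt11Aux6

namespace Stmt11Aux7
open Stmt11Aux Stmt11Aux2 Stmt11Aux3 Stmt11Aux4 Stmt11Aux5
variable {d : ℕ} {n : Fin d → ℕ}

noncomputable def w (s : Multiset (Pt d n)) : ℕ :=
  (s.map (fun a => (∑ i, (a i : ℕ)) ^ 2)).sum

noncomputable def B (d : ℕ) (n : Fin d → ℕ) : ℕ := (∑ i, n i) ^ 2

@[simp] lemma w_zero : w (0 : Multiset (Pt d n)) = 0 := rfl
@[simp] lemma w_cons (a : Pt d n) (s : Multiset (Pt d n)) :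
    w (a ::ₘ s) = (∑ i, (a i : ℕ)) ^ 2 + w s := by simp [w]

lemma w_le (s : Multiset (Pt d n)) : w s ≤ Multiset.card s * B d n := by
  induction s using Multiset.induction with
  | empty => simp
  | cons a s ih =>
    rw [w_cons, Multiset.card_cons, add_mul, one_mul, add_comm (Multiset.card s * B d n)]
    refine add_le_add ?_ ih
    rw [B]
    exact Nat.pow_le_pow_left (Finset.sum_le_sum fun i _ => le_of_lt (a i).isLt) 2

lemma coord_pair (a b : Pt d n) (i : Fin d) :
    ((a ⊔ b) i = b i ∧ (a ⊓ b) i = a i ∧ a i ≤ b i) ∨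
    ((a ⊔ b) i = a i ∧ (a ⊓ b) i = b i ∧ b i ≤ a i) := by
  rw [Pi.sup_apply, Pi.inf_apply]
  rcases le_total (a i) (b i) with h | h
  · exact Or.inl ⟨sup_eq_right.mpr h, inf_eq_left.mpr h, h⟩
  · exact Or.inr ⟨sup_eq_left.mpr h, inf_eq_right.mpr h, h⟩

lemma map_swap (a b : Pt d n) (rest : Multiset (Pt d n)) (i : Fin d) :
    ((a ⊔ b) ::ₘ (a ⊓ b) ::ₘ rest).map (· i) = (a ::ₘ b ::ₘ rest).map (· i) := by
  simp only [Multiset.map_cons]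
  rcases coord_pair a b i with ⟨h1, h2, -⟩ | ⟨h1, h2, -⟩
  · rw [h1, h2, Multiset.cons_swap]
  · rw [h1, h2]

lemma sum_coord_sup_add_inf (a b : Pt d n) :
    (∑ i, (((a ⊔ b) i : Fin (n i)) : ℕ)) + (∑ i, (((a ⊓ b) i : Fin (n i)) : ℕ))
      = (∑ i, ((a i : Fin (n i)) : ℕ)) + (∑ i, ((b i : Fin (n i)) : ℕ)) := by
  rw [← Finset.sum_add_distrib, ← Finset.sum_add_distrib]
  refine Finset.sum_congr rfl fun i _ => ?_
  rcases coord_pair a b i with ⟨h1, h2, -⟩ | ⟨h1, h2, -⟩ <;> rw [h1, h2] <;> omega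

lemma sum_coord_lt_sup (a b : Pt d n) (hj : ∃ j, a j < b j) :
    (∑ i, ((a i : Fin (n i)) : ℕ)) < ∑ i, (((a ⊔ b) i : Fin (n i)) : ℕ) := by
  obtain ⟨j, hj⟩ := hj
  refine Finset.sum_lt_sum (fun i _ => ?_) ⟨j, Finset.mem_univ j, ?_⟩
  · rcases coord_pair a b i with ⟨h1, -, h3⟩ | ⟨h1, -, -⟩
    · rw [h1]; exact h3
    · rw [h1]
  · rcases coord_pair a b j with ⟨h1, -, -⟩ | ⟨h1, -, h3⟩
    · rw [h1]; exact hj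
    · exact absurd hj (not_lt.mpr h3)

lemma sq_ineq {sa sb su sv : ℕ} (h1 : su + sv = sa + sb) (h2 : sa < su) (h3 : sb < su) :
    sa ^ 2 + sb ^ 2 < su ^ 2 + sv ^ 2 := by
  zify at *
  nlinarith [mul_pos (by linarith : (0:ℤ) < su - sa) (by linarith : (0:ℤ) < su - sb)]

end Stmt11Aux7

namespace Stmt11Aux8
open Stmt11Aux Stmt11Aux2 Stmt11Aux3 Stmt11Aux4 Stmt11Aux5 Stmt11Aux7
variable {d : ℕ} {n : Fin d → ℕ}

lemma swap_step {s : Multiset (Pt d n)} (hch : ¬ Ch s) :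
    ∃ s', Multiset.card s' = Multiset.card s ∧ (∀ i, s'.map (· i) = s.map (· i)) ∧
      w s < w s' ∧ P s - P s' ∈ Ideal.span (G d n) := by
  rw [Ch] at hch; push_neg at hch
  obtain ⟨a, has, b, hbs, h1, h2⟩ := hch
  have hi : ∃ i, b i < a i := by
    by_contra h; push_neg at h
    exact h1 fun i => h i
  have hj : ∃ j, a j < b j := by
    by_contra h; push_neg at h
    exact h2 fun i => h i
  have hne : a ≠ b := fun h => h1 (h ▸ le_refl a)
  have hb' : b ∈ s.erase a := (Multiset.mem_erase_of_ne fun h => hne h.symm).mpr hbs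
  set rest := (s.erase a).erase b with hrest
  have hseq : s = a ::ₘ b ::ₘ rest := by
    rw [hrest, Multiset.cons_erase hb', Multiset.cons_erase has]
  refine ⟨(a ⊔ b) ::ₘ (a ⊓ b) ::ₘ rest, ?_, ?_, ?_, ?_⟩
  · rw [hseq]; simp
  · intro i; rw [map_swap, ← hseq]
  · rw [hseq, w_cons, w_cons, w_cons, w_cons]
    have key1 := sum_coord_lt_sup a b hj
    have key2 : (∑ i, ((b i : Fin (n i)) : ℕ)) < ∑ i, (((a ⊔ b) i : Fin (n i)) : ℕ) := by
      have := sum_coord_lt_sup b a hi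
      rwa [sup_comm b a] at this
    have key3 := sq_ineq (sum_coord_sup_add_inf a b) key1 key2
    omega
  · rw [hseq]
    simp only [P_cons]
    have hring : X a * (X b * P rest) - X (a ⊔ b) * (X (a ⊓ b) * P rest)
        = P rest * (X a * X b - X (a ⊔ b) * X (a ⊓ b)) := by ring
    rw [hring]
    exact Ideal.mul_mem_left _ _ (Ideal.subset_span ⟨a, b, hi, hj, rfl⟩)

lemma reduce_aux : ∀ (N : ℕ) (s : Multiset (Pt d n)),
    Multiset.card s * B d n - w s ≤ N →
    ∃ t, Ch t ∧ Multiset.card t = Multiset.card s ∧ (∀ i, t.map (· i) = s.map (· i)) ∧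
      P s - P t ∈ Ideal.span (G d n) := by
  intro N
  induction N with
  | zero =>
    intro s hN
    by_cases hch : Ch s
    · exact ⟨s, hch, rfl, fun i => rfl, by rw [sub_self]; exact Ideal.zero_mem _⟩
    · exfalso
      obtain ⟨s', hcard, -, hw, -⟩ := swap_step hch
      have hle := w_le s'
      rw [hcard] at hle
      omega
  | succ N ih =>
    intro s hN
    by_cases hch : Ch s
    · exact ⟨s, hch, rfl, fun i => rfl, by rw [sub_self]; exact Ideal.zero_mem _⟩
    · obtain ⟨s', hcard, hmap, hw, hmem⟩ := swap_step hch
      have hle := w_le s'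
      rw [hcard] at hle
      obtain ⟨t, hturn, htcard, htmap, htmem⟩ := ih s' (by rw [hcard]; omega)
      refine ⟨t, hturn, by rw [htcard, hcard], fun i => by rw [htmap i, hmap i], ?_⟩
      have : P s - P t = (P s - P s') + (P s' - P t) := by ring
      rw [this]
      exact Ideal.add_mem _ hmem htmem

lemma reduce (s : Multiset (Pt d n)) :
    ∃ t, Ch t ∧ Multiset.card t = Multiset.card s ∧ (∀ i, t.map (· i) = s.map (· i)) ∧
      P s - P t ∈ Ideal.span (G d n) :=
  reduce_aux _ s le_rfl

end Stmt11Aux8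

namespace Stmt11Aux9
open Stmt11Aux Stmt11Aux2 Stmt11Aux3 Stmt11Aux4 Stmt11Aux5 Stmt11Aux6 Stmt11Aux7 Stmt11Aux8
variable {d : ℕ} {n : Fin d → ℕ}

lemma P_eq_monomial (s : Multiset (Pt d n)) : P s = monomial (Multiset.toFinsupp s) 1 := by
  induction s using Multiset.induction with
  | empty => simp
  | cons a s ih =>
    have hcons : Multiset.toFinsupp (a ::ₘ s)
        = Finsupp.single a 1 + Multiset.toFinsupp s := by
      rw [← Multiset.singleton_add, map_add, Multiset.toFinsupp_singleton]
    rw [P_cons, ih, hcons,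
      show (X a : MvPolynomial (Pt d n) ℝ) = monomial (Finsupp.single a 1) 1 from rfl,
      monomial_mul, one_mul]

lemma P_toMultiset (u : Pt d n →₀ ℕ) : P (Finsupp.toMultiset u) = monomial u 1 := by
  rw [P_eq_monomial, Finsupp.toMultiset_toFinsupp]

lemma mem_span_of_phi_eq_zero (f : MvPolynomial (Pt d n) ℝ) (hf : φ d n f = 0) :
    f ∈ Ideal.span (G d n) := by
  have H := fun m : Pt d n →₀ ℕ => reduce (d := d) (n := n) (Finsupp.toMultiset m)
  choose t hch hcard hmap hmem using H
  set g : MvPolynomial (Pt d n) ℝ := ∑ m ∈ f.support, coeff m f • P (t m) with hg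
  have hfg : f - g ∈ Ideal.span (G d n) := by
    have hf2 : f = ∑ m ∈ f.support, coeff m f • P (Finsupp.toMultiset m) := by
      conv_lhs => rw [as_sum f]
      refine Finset.sum_congr rfl fun m _ => ?_
      rw [P_toMultiset, smul_monomial, smul_eq_mul, mul_one]
    have key : f - g = ∑ m ∈ f.support,
        coeff m f • (P (Finsupp.toMultiset m) - P (t m)) := by
      conv_lhs => rw [hf2, hg]
      rw [← Finset.sum_sub_distrib]
      exact Finset.sum_congr rfl fun m _ => (smul_sub _ _ _).symm
    rw [key]
    refine Ideal.sum_mem _ fun m _ => ?_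
    rw [smul_eq_C_mul]
    exact Ideal.mul_mem_left _ _ (hmem m)
  have hg0 : φ d n g = 0 := by
    have h1 : φ d n (f - g) = 0 := span_G_le_ker hfg
    rw [map_sub, hf, zero_sub, neg_eq_zero] at h1
    exact h1
  have hgzero : g = 0 := by
    apply MvPolynomial.ext
    intro u
    rw [coeff_zero]
    have hcoeffg : coeff u g
        = ∑ m ∈ f.support, coeff m f * (if Multiset.toFinsupp (t m) = u then 1 else 0) := by
      rw [hg, coeff_sum]
      refine Finset.sum_congr rfl fun m _ => ?_
      rw [P_eq_monomial, coeff_smul, coeff_monomial, smul_eq_mul]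
    by_cases hu : Ch (Finsupp.toMultiset u)
    · have hphi : coeff (E (Finsupp.toMultiset u)) (φ d n g) = 0 := by
        rw [hg0, coeff_zero]
      rw [hg, map_sum] at hphi
      simp only [map_smul, phi_P] at hphi
      rw [coeff_sum] at hphi
      simp only [coeff_smul, coeff_monomial, smul_eq_mul] at hphi
      rw [hcoeffg]
      refine Eq.trans (Finset.sum_congr rfl fun m _ => ?_) hphi
      congr 1
      by_cases h : Multiset.toFinsupp (t m) = u
      · have htm : t m = Finsupp.toMultiset u := by
          rw [← h, Multiset.toFinsupp_toMultiset]
        rw [if_pos h, if_pos (by rw [htm])]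
      · have hE' : ¬(E (t m) = E (Finsupp.toMultiset u)) := fun hE => h
          ((congrArg Multiset.toFinsupp (E_inj_of_ch (hch m) hu hE)).trans
            (Finsupp.toMultiset_toFinsupp u))
        rw [if_neg h, if_neg hE']
    · rw [hcoeffg]
      refine Finset.sum_eq_zero fun m _ => ?_
      rw [if_neg, mul_zero]
      intro h
      apply hu
      have : t m = Finsupp.toMultiset u := by rw [← h, Multiset.toFinsupp_toMultiset]
      rw [← this]
      exact hch m
  rw [hgzero, sub_zero] at hfg
  exact hfg

end Stmt11Aux9

open Stmt11Aux Stmt11Aux2 Stmt11Aux3 Stmt11Aux4 Stmt11Aux9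

/-- Sum-of-squares property of the Segre ideal `I₀`: if `f₁² + ⋯ + f_l² ∈ I₀`, where
`I₀` is generated by the rank-one binomials `x_a x_b − x_{a∨b} x_{a∧b}` over the
incomparable pairs `(a,b) ∈ S`, then every `f_i ∈ I₀`. -/
theorem stmt_11 (d : ℕ) (n : Fin d → ℕ)
    (I₀ : Ideal (MvPolynomial ((i : Fin d) → Fin (n i)) ℝ))
    (hI₀ : I₀ = Ideal.span {p | ∃ a b : (i : Fin d) → Fin (n i),
      (∃ i, b i < a i) ∧ (∃ j, a j < b j) ∧
      p = MvPolynomial.X a * MvPolynomial.X b -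
          MvPolynomial.X (a ⊔ b) * MvPolynomial.X (a ⊓ b)})
    (l : ℕ) (f : Fin l → MvPolynomial ((i : Fin d) → Fin (n i)) ℝ)
    (hsum : ∑ i, (f i) ^ 2 ∈ I₀) :
    ∀ i, f i ∈ I₀ := by
  subst hI₀
  intro i
  have hsum' : ∑ j, (f j) ^ 2 ∈ Ideal.span (G d n) := hsum
  have h0 : φ d n (∑ j, f j ^ 2) = 0 := span_G_le_ker hsum'
  rw [map_sum] at h0
  simp only [map_pow] at h0
  have hf0 : φ d n (f i) = 0 := by
    apply MvPolynomial.funext (R := ℝ)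
    intro x
    rw [map_zero]
    have hx : ∑ k, (eval x (φ d n (f k))) ^ 2 = 0 := by
      have := congrArg (eval x) h0
      rw [map_sum, map_zero] at this
      simpa [map_pow] using this
    have hzero := (Finset.sum_eq_zero_iff_of_nonneg
      (fun k _ => sq_nonneg (eval x (φ d n (f k))))).mp hx i (Finset.mem_univ i)
    exact (pow_eq_zero_iff two_ne_zero).mp hzero
  exact mem_span_of_phi_eq_zero (f i) hf0
end

section
/- The Segre ideal I₀ = ⟨x_a x_b − x_{a∨b} x_{a∧b} : (a,b) ∈ S⟩ ⊆ ℝ[x_a : a ∈ [n₁]×⋯×[n_d]] is a real radical ideal, i.e., I₀ equals its real radical. -/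
/-!
The Segre ideal is the kernel of the Segre parametrization `x_a ↦ t · ∏ᵢ y_{i, aᵢ}` into a
polynomial ring over `ℝ`. A polynomial ring over `ℝ` is formally real, so the kernel of any ring
map into it is real radical: `f^{2r} + Σ gᵢ² ↦ 0` forces `f ↦ 0`.

The kernel is no larger than the ideal by a straightening argument. Replacing an incomparable
pair `x_a x_b` by `x_{a∨b} x_{a∧b}` strictly increases `Σ (Σᵢ aᵢ)²` over the factors of a
monomial, so modulo the ideal every monomial becomes one whose indices form a chain; and a chain
is determined by its coordinate multisets, which the parametrization records, so distinct chain
monomials have distinct images.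
-/

open MvPolynomial

theorem IsSumSq.map {R S F : Type*} [NonAssocSemiring R] [NonAssocSemiring S] [FunLike F R S]
    [RingHomClass F R S] (f : F) {s : R} (hs : IsSumSq s) : IsSumSq (f s) := by
  induction hs with
  | zero => simp
  | sq_add a _ ih => simpa using ih.sq_add (f a)

theorem IsFormallyReal.eq_zero_of_mul_self_add {R : Type*} [CommRing R] [IsFormallyReal R]
    {a s : R} (hs : IsSumSq s) (h : a * a + s = 0) : a = 0 :=
  IsReduced.eq_zero a ⟨2, by
    rw [pow_two]; exact IsFormallyReal.eq_zero_of_add_right (.mul_self a) hs h⟩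

instance MvPolynomial.instIsFormallyReal {σ R : Type*} [CommRing R] [IsDomain R] [Infinite R]
    [IsFormallyReal R] : IsFormallyReal (MvPolynomial σ R) :=
  .of_eq_zero_of_eq_zero_of_mul_self_add fun {s a} hs h => funext fun x => by
    rw [map_zero]
    refine IsFormallyReal.eq_zero_of_mul_self_add (hs.map (eval x)) ?_
    simpa using congrArg (eval x) h

theorem RingHom.mem_ker_of_pow_add_mem_ker {A B F : Type*} [CommRing A] [CommRing B]
    [IsFormallyReal B] [FunLike F A B] [RingHomClass F A B] (φ : F) {f s : A} {r : ℕ}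
    (hs : IsSumSq s) (h : f ^ (2 * r) + s ∈ RingHom.ker φ) : f ∈ RingHom.ker φ := by
  rw [RingHom.mem_ker, map_add, pow_mul', pow_two, map_mul] at h
  have hr : φ f ^ r = 0 := by
    rw [← map_pow]; exact IsFormallyReal.eq_zero_of_mul_self_add (hs.map φ) h
  exact IsReduced.eq_zero _ ⟨r, hr⟩

namespace MvPolynomial

variable {σ τ R : Type*} [CommRing R]

theorem prod_map_X_eq_monomial [DecidableEq σ] (B : Multiset σ) :
    (B.map X).prod = monomial (Multiset.toFinsupp B) (1 : R) := by
  induction B using Multiset.induction_on with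
  | empty => simp
  | cons a B ih =>
    rw [Multiset.map_cons, Multiset.prod_cons, ih, ← Multiset.singleton_add, map_add,
      Multiset.toFinsupp_singleton, monomial_single_add, pow_one]

section Straightening

variable (φ : MvPolynomial σ R →ₐ[R] MvPolynomial τ R) {S : Set (σ →₀ ℕ)}
  {e : (σ →₀ ℕ) → (τ →₀ ℕ)}

theorem coeff_apply_of_mem_restrictSupport
    (hφ : ∀ m ∈ S, φ (monomial m 1) = monomial (e m) 1) (he : S.InjOn e)
    {p : MvPolynomial σ R} (hp : p ∈ restrictSupport R S) {m : σ →₀ ℕ} (hm : m ∈ S) :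
    coeff (e m) (φ p) = coeff m p := by
  classical
  rw [mem_restrictSupport_iff] at hp
  conv_lhs => rw [p.as_sum]
  rw [map_sum, coeff_sum, Finset.sum_eq_single m]
  · rw [← mul_one (coeff m p), ← smul_eq_mul, ← smul_monomial, map_smul, hφ m hm,
      coeff_smul, coeff_monomial, if_pos rfl]
  · intro m' hm' hne
    rw [← mul_one (coeff m' p), ← smul_eq_mul, ← smul_monomial, map_smul, hφ m' (hp hm'),
      coeff_smul, coeff_monomial, if_neg (fun h => hne (he (hp hm') hm h)), smul_zero]
  · intro hm'
    rw [notMem_support_iff.1 hm', monomial_zero, map_zero, coeff_zero]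

theorem eq_zero_of_mem_restrictSupport_of_apply_eq_zero
    (hφ : ∀ m ∈ S, φ (monomial m 1) = monomial (e m) 1) (he : S.InjOn e)
    {p : MvPolynomial σ R} (hp : p ∈ restrictSupport R S) (h : φ p = 0) : p = 0 := by
  ext m
  rw [coeff_zero]
  by_cases hm : m ∈ S
  · rw [← coeff_apply_of_mem_restrictSupport φ hφ he hp hm, h, coeff_zero]
  · exact notMem_support_iff.1 fun h => hm (hp h)

theorem exists_mem_restrictSupport_sub_mem {I : Ideal (MvPolynomial σ R)}
    (hS : ∀ m, ∃ m' ∈ S, monomial m 1 - monomial m' 1 ∈ I) (p : MvPolynomial σ R) :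
    ∃ q ∈ restrictSupport R S, p - q ∈ I := by
  induction p using induction_on' with
  | monomial m a =>
    obtain ⟨m', hm', hmem⟩ := hS m
    refine ⟨monomial m' a, by simp [hm'], ?_⟩
    simpa [mul_sub, C_mul_monomial] using I.mul_mem_left (C a) hmem
  | add p q hp hq =>
    obtain ⟨p', hp', hpI⟩ := hp
    obtain ⟨q', hq', hqI⟩ := hq
    exact ⟨p' + q', add_mem hp' hq', by simpa [add_sub_add_comm] using add_mem hpI hqI⟩

theorem ker_eq_of_straightening {I : Ideal (MvPolynomial σ R)} (hI : I ≤ RingHom.ker φ)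
    (hφ : ∀ m ∈ S, φ (monomial m 1) = monomial (e m) 1) (he : S.InjOn e)
    (hS : ∀ m, ∃ m' ∈ S, monomial m 1 - monomial m' 1 ∈ I) : RingHom.ker φ = I := by
  refine le_antisymm (fun p hp => ?_) hI
  obtain ⟨q, hq, hpq⟩ := exists_mem_restrictSupport_sub_mem hS p
  have hφq : φ q = 0 := by
    have := hI hpq
    rw [RingHom.mem_ker, map_sub, hp, zero_sub, neg_eq_zero] at this
    exact this
  simpa [eq_zero_of_mem_restrictSupport_of_apply_eq_zero φ hφ he hq hφq] using hpq

end Straightening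

end MvPolynomial

namespace Multiset

theorem exists_forall_le_of_isChain {α : Type*} [PartialOrder α] {B : Multiset α}
    (hB : IsChain (· ≤ ·) {a | a ∈ B}) (hne : B ≠ 0) : ∃ t ∈ B, ∀ a ∈ B, a ≤ t := by
  classical
  obtain ⟨t, ht⟩ := B.toFinset.exists_maximal (by simpa using hne)
  have htB : t ∈ B := by simpa using ht.1
  refine ⟨t, htB, fun a ha => ?_⟩
  rcases hB.total ha htB with h | h
  · exact h
  · exact ht.2 (by simpa using ha) h

/-- The top element of such a chain is the coordinatewise maximum, so it can be peeled off. -/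
theorem eq_of_isChain_of_map_apply_eq {ι : Type*} {β : ι → Type*} [∀ i, PartialOrder (β i)]
    {B C : Multiset (∀ i, β i)} (hB : IsChain (· ≤ ·) {a | a ∈ B})
    (hC : IsChain (· ≤ ·) {a | a ∈ C}) (hcard : card B = card C)
    (hcol : ∀ i, B.map (· i) = C.map (· i)) : B = C := by
  classical
  obtain ⟨k, hk⟩ : ∃ k, card B = k := ⟨_, rfl⟩
  induction k generalizing B C with
  | zero => rw [card_eq_zero.1 hk, card_eq_zero.1 (hcard.symm.trans hk)]
  | succ k ih =>
    obtain ⟨t, htB, ht⟩ := exists_forall_le_of_isChain hB (card_pos.1 (by omega))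
    obtain ⟨u, huC, hu⟩ := exists_forall_le_of_isChain hC (card_pos.1 (by omega))
    have top_le {B C : Multiset (∀ i, β i)} (hcol : ∀ i, B.map (· i) = C.map (· i)) {t u}
        (htB : t ∈ B) (hu : ∀ a ∈ C, a ≤ u) : t ≤ u := fun i => by
      have hti : t i ∈ C.map (· i) := hcol i ▸ mem_map_of_mem (fun a : ∀ i, β i => a i) htB
      obtain ⟨x, hx, hxt⟩ := mem_map.1 hti
      rw [← hxt]
      exact hu x hx i
    obtain rfl : t = u :=
      le_antisymm (top_le hcol htB hu) (top_le (fun i => (hcol i).symm) huC ht)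
    have hk' : card (B.erase t) = k := by rw [card_erase_of_mem htB, hk, Nat.pred_succ]
    rw [← cons_erase htB, ← cons_erase huC] at hcol hcard ⊢
    simp only [card_cons, map_cons, cons_inj_right, Nat.add_right_cancel_iff] at hcol hcard
    rw [ih (hB.mono fun _ => mem_of_mem_erase) (hC.mono fun _ => mem_of_mem_erase) hcard hcol hk']

end Multiset

variable {ι : Type*} {n : ι → ℕ} {R : Type*} [CommRing R]

variable (n R) in
noncomputable def segreIdeal : Ideal (MvPolynomial ((i : ι) → Fin (n i)) R) :=
  Ideal.span {p | ∃ a b : (i : ι) → Fin (n i), (∃ i, b i < a i) ∧ (∃ j, a j < b j) ∧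
    p = X a * X b - X (a ⊔ b) * X (a ⊓ b)}

theorem X_mul_X_sub_mem_segreIdeal {a b : (i : ι) → Fin (n i)} (hab : ¬ a ≤ b)
    (hba : ¬ b ≤ a) : X a * X b - X (a ⊔ b) * X (a ⊓ b) ∈ segreIdeal n R := by
  refine Ideal.subset_span ⟨a, b, ?_, ?_, rfl⟩
  · simpa [Pi.le_def] using hab
  · simpa [Pi.le_def] using hba

variable [Fintype ι]

namespace Segre

def weight (a : (i : ι) → Fin (n i)) : ℕ := ∑ i, (a i : ℕ)

theorem weight_sup_add_weight_inf (a b : (i : ι) → Fin (n i)) :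
    weight (a ⊔ b) + weight (a ⊓ b) = weight a + weight b := by
  simp only [weight, ← Finset.sum_add_distrib]
  refine Finset.sum_congr rfl fun i _ => ?_
  simp [max_add_min]

theorem weight_lt_weight_sup {a b : (i : ι) → Fin (n i)} (h : ¬ b ≤ a) :
    weight a < weight (a ⊔ b) := by
  obtain ⟨i, hi⟩ := not_forall.1 h
  refine Finset.sum_lt_sum (fun j _ => by simp) ⟨i, Finset.mem_univ i, ?_⟩
  simpa using not_le.1 hi

theorem weight_le (a : (i : ι) → Fin (n i)) : weight a ≤ ∑ i, n i :=
  Finset.sum_le_sum fun i _ => (a i).isLt.le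

def potential (B : Multiset ((i : ι) → Fin (n i))) : ℕ := (B.map fun a => weight a ^ 2).sum

theorem potential_le (B : Multiset ((i : ι) → Fin (n i))) :
    potential B ≤ Multiset.card B * (∑ i, n i) ^ 2 := by
  simpa [potential] using Multiset.sum_map_le_sum_map (fun a => weight a ^ 2)
    (fun _ => (∑ i, n i) ^ 2) (fun a _ => Nat.pow_le_pow_left (weight_le a) 2)

theorem potential_lt_potential_sup_inf {a b : (i : ι) → Fin (n i)} (hab : ¬ a ≤ b)
    (hba : ¬ b ≤ a) (D : Multiset ((i : ι) → Fin (n i))) :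
    potential (a ::ₘ b ::ₘ D) < potential ((a ⊔ b) ::ₘ (a ⊓ b) ::ₘ D) := by
  have hsum := weight_sup_add_weight_inf a b
  have ha := weight_lt_weight_sup hba
  have hb : weight b < weight (a ⊔ b) := sup_comm a b ▸ weight_lt_weight_sup hab
  simp only [potential, Multiset.map_cons, Multiset.sum_cons, ← add_assoc]
  nlinarith

end Segre

open Segre in
theorem exists_isChain_prod_sub_mem_segreIdeal (B : Multiset ((i : ι) → Fin (n i))) :
    ∃ C : Multiset ((i : ι) → Fin (n i)), IsChain (· ≤ ·) {a | a ∈ C} ∧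
      (B.map X).prod - (C.map X).prod ∈ segreIdeal n R := by
  classical
  induction hk : Multiset.card B * (∑ i, n i) ^ 2 - potential B using Nat.strong_induction_on
    generalizing B with
  | _ k ih =>
  by_cases hB : IsChain (· ≤ ·) {a | a ∈ B}
  · exact ⟨B, hB, by rw [sub_self]; exact zero_mem _⟩
  obtain ⟨a, ha, b, hb, hne, hab, hba⟩ : ∃ a ∈ B, ∃ b ∈ B, a ≠ b ∧ ¬ a ≤ b ∧ ¬ b ≤ a := by
    simpa [IsChain, Set.Pairwise] using hB
  obtain ⟨D, rfl⟩ : ∃ D, B = a ::ₘ b ::ₘ D :=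
    ⟨(B.erase a).erase b, by
      rw [Multiset.cons_erase ((Multiset.mem_erase_of_ne hne.symm).2 hb), Multiset.cons_erase ha]⟩
  have hlt := potential_lt_potential_sup_inf hab hba D
  have hle := potential_le ((a ⊔ b) ::ₘ (a ⊓ b) ::ₘ D)
  obtain ⟨C, hC, hmem⟩ := ih _ (by simp only [Multiset.card_cons] at hk hle ⊢; omega)
    ((a ⊔ b) ::ₘ (a ⊓ b) ::ₘ D) rfl
  refine ⟨C, hC, ?_⟩
  have hswap := Ideal.mul_mem_right (D.map X).prod _ (X_mul_X_sub_mem_segreIdeal (R := R) hab hba)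
  convert add_mem hswap hmem using 1
  simp only [Multiset.map_cons, Multiset.prod_cons]
  ring

/-- The exponent of `t · ∏ᵢ y_{i, aᵢ}`, where `none` stands for `t` and `some ⟨i, j⟩` for
`y_{i, j}`. -/
noncomputable def segreExponent (a : (i : ι) → Fin (n i)) : Option (Σ i, Fin (n i)) →₀ ℕ :=
  Finsupp.single none 1 + ∑ i, Finsupp.single (some ⟨i, a i⟩) 1

theorem segreExponent_apply_none (a : (i : ι) → Fin (n i)) : segreExponent a none = 1 := by
  simp [segreExponent]

theorem segreExponent_apply_some (a : (i : ι) → Fin (n i)) (i : ι) (j : Fin (n i)) :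
    segreExponent a (some ⟨i, j⟩) = if a i = j then 1 else 0 := by
  classical
  simp only [segreExponent, Finsupp.add_apply, Finsupp.finsetSum_apply, Finsupp.single_apply]
  rw [Finset.sum_eq_single i]
  · simp
  · intro i' _ hi'
    simp [hi']
  · simp

theorem segreExponent_sup_add_inf (a b : (i : ι) → Fin (n i)) :
    segreExponent (a ⊔ b) + segreExponent (a ⊓ b) = segreExponent a + segreExponent b := by
  ext (_ | ⟨i, j⟩)
  · simp [segreExponent_apply_none]
  · simp only [Finsupp.add_apply, segreExponent_apply_some, Pi.sup_apply, Pi.inf_apply]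
    rcases le_total (a i) (b i) with h | h
    · simp only [sup_eq_right.2 h, inf_eq_left.2 h, add_comm]
    · simp only [sup_eq_left.2 h, inf_eq_right.2 h]

theorem sum_map_segreExponent_apply_none (B : Multiset ((i : ι) → Fin (n i))) :
    (B.map segreExponent).sum none = Multiset.card B := by
  induction B using Multiset.induction_on with
  | empty => simp
  | cons a B ih => simp [segreExponent_apply_none, ih, add_comm]

theorem sum_map_segreExponent_apply_some (B : Multiset ((i : ι) → Fin (n i))) (i : ι)
    (j : Fin (n i)) : (B.map segreExponent).sum (some ⟨i, j⟩) = (B.map (· i)).count j := by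
  induction B using Multiset.induction_on with
  | empty => simp
  | cons a B ih =>
    simp only [Multiset.map_cons, Multiset.sum_cons, Finsupp.add_apply, ih,
      segreExponent_apply_some, Multiset.count_cons]
    by_cases h : a i = j
    · simp [h, add_comm]
    · simp [h, Ne.symm h]

theorem injOn_sum_map_segreExponent :
    {m : ((i : ι) → Fin (n i)) →₀ ℕ | IsChain (· ≤ ·) {a | a ∈ Finsupp.toMultiset m}}.InjOn
      fun m => ((Finsupp.toMultiset m).map segreExponent).sum := by
  classical
  intro m hm m' hm' h
  simp only at h
  rw [← Finsupp.toMultiset_toFinsupp m, ← Finsupp.toMultiset_toFinsupp m']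
  refine congrArg _
    (Multiset.eq_of_isChain_of_map_apply_eq hm hm' ?_ fun i => Multiset.ext.2 fun j => ?_)
  · rw [← sum_map_segreExponent_apply_none, h, sum_map_segreExponent_apply_none]
  · rw [← sum_map_segreExponent_apply_some, h, sum_map_segreExponent_apply_some]

variable (n R) in
noncomputable def segreMap :
    MvPolynomial ((i : ι) → Fin (n i)) R →ₐ[R] MvPolynomial (Option (Σ i, Fin (n i))) R :=
  aeval fun a => monomial (segreExponent a) 1

theorem segreMap_prod_map_X (B : Multiset ((i : ι) → Fin (n i))) :
    segreMap n R (B.map X).prod = monomial (B.map segreExponent).sum 1 := by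
  induction B using Multiset.induction_on with
  | empty => simp
  | cons a B ih =>
    rw [Multiset.map_cons, Multiset.prod_cons, map_mul, ih, segreMap, aeval_X, Multiset.map_cons,
      Multiset.sum_cons, monomial_mul, one_mul]

theorem segreMap_monomial (m : ((i : ι) → Fin (n i)) →₀ ℕ) :
    segreMap n R (monomial m 1) = monomial ((Finsupp.toMultiset m).map segreExponent).sum 1 := by
  classical
  conv_lhs => rw [← Finsupp.toMultiset_toFinsupp m, ← prod_map_X_eq_monomial]
  exact segreMap_prod_map_X _

theorem segreIdeal_le_ker : segreIdeal n R ≤ RingHom.ker (segreMap n R) := by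
  refine Ideal.span_le.2 ?_
  rintro _ ⟨a, b, -, -, rfl⟩
  simp [segreMap, monomial_mul, segreExponent_sup_add_inf]

theorem ker_segreMap : RingHom.ker (segreMap n R) = segreIdeal n R := by
  classical
  refine ker_eq_of_straightening _ segreIdeal_le_ker (fun m _ => segreMap_monomial m)
    injOn_sum_map_segreExponent fun m => ?_
  obtain ⟨C, hC, hmem⟩ := exists_isChain_prod_sub_mem_segreIdeal (R := R) (Finsupp.toMultiset m)
  refine ⟨Multiset.toFinsupp C, by simpa using hC, ?_⟩
  rwa [prod_map_X_eq_monomial, prod_map_X_eq_monomial, Finsupp.toMultiset_toFinsupp] at hmem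

/-- The Segre ideal `I₀ = ⟨x_a x_b − x_{a∨b} x_{a∧b} : (a,b) ∈ S⟩` is real radical:
a polynomial `f` satisfies `f^{2r} + Σ gᵢ² ∈ I₀` for some `r > 0` and `gᵢ` iff
`f ∈ I₀`. -/
theorem stmt_12 (d : ℕ) (n : Fin d → ℕ)
    (I₀ : Ideal (MvPolynomial ((i : Fin d) → Fin (n i)) ℝ))
    (hI₀ : I₀ = Ideal.span {p | ∃ a b : (i : Fin d) → Fin (n i),
      (∃ i, b i < a i) ∧ (∃ j, a j < b j) ∧
      p = MvPolynomial.X a * MvPolynomial.X b -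
          MvPolynomial.X (a ⊔ b) * MvPolynomial.X (a ⊓ b)}) :
    ∀ f : MvPolynomial ((i : Fin d) → Fin (n i)) ℝ,
      (∃ r : ℕ, 0 < r ∧ ∃ (l : ℕ) (g : Fin l → MvPolynomial ((i : Fin d) → Fin (n i)) ℝ),
        f ^ (2 * r) + ∑ i, (g i) ^ 2 ∈ I₀) ↔ f ∈ I₀ := by
  have hker : RingHom.ker (segreMap n ℝ) = I₀ := hI₀ ▸ ker_segreMap
  intro f
  constructor
  · rintro ⟨r, -, l, g, h⟩
    rw [← hker] at h ⊢
    exact RingHom.mem_ker_of_pow_add_mem_ker _ (IsSumSq.sum_sq _ _) h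
  · intro hf
    exact ⟨1, one_pos, 0, ![], by simpa [← sq] using I₀.mul_mem_left f hf⟩
end

section
/- The complexification of the Segre ideal, I₀·ℂ[X] where I₀ = ⟨x_a x_b − x_{a∨b} x_{a∧b} : (a,b) ∈ S⟩, is a radical ideal of ℂ[x_a : a ∈ [n₁]×⋯×[n_d]]. -/
/-!
The Segre ideal is the kernel of the monomial map `x_a ↦ ∏ᵢ y_{i, a i}` into a polynomial ring
over `R`, hence radical as soon as `R` is reduced. The binomials generate the whole kernel because
a monomial `∏_{a ∈ M} x_a` is congruent modulo them to the product over a chain, obtained by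
repeatedly replacing `x_a x_b` by `x_{a ⊔ b} x_{a ⊓ b}`, and that chain is determined by the
coordinate multisets of `M`, which are exactly what the image monomial records.
-/

namespace MvPolynomial

section Straightening

variable {ι : Type*} {α : ι → Type*} [∀ i, LinearOrder (α i)] (R : Type*) [CommRing R]

noncomputable def segreIdeal : Ideal (MvPolynomial (∀ i, α i) R) :=
  Ideal.span (Set.range fun ab : (∀ i, α i) × (∀ i, α i) =>
    X ab.1 * X ab.2 - X (ab.1 ⊔ ab.2) * X (ab.1 ⊓ ab.2))

theorem X_mul_X_sub_mem_segreIdeal (a b : ∀ i, α i) :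
    X a * X b - X (a ⊔ b) * X (a ⊓ b) ∈ segreIdeal R :=
  Ideal.subset_span ⟨(a, b), rfl⟩

theorem span_incomparable_eq_segreIdeal :
    Ideal.span {p | ∃ a b : ∀ i, α i, (∃ i, b i < a i) ∧ (∃ j, a j < b j) ∧
      p = X a * X b - X (a ⊔ b) * X (a ⊓ b)} = segreIdeal (α := α) R := by
  refine le_antisymm (Ideal.span_le.mpr ?_) (Ideal.span_le.mpr ?_)
  · rintro _ ⟨a, b, -, -, rfl⟩
    exact X_mul_X_sub_mem_segreIdeal R a b
  · rintro _ ⟨⟨a, b⟩, rfl⟩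
    by_cases hab : a ≤ b
    · simp [sup_eq_right.mpr hab, inf_eq_left.mpr hab, mul_comm]
    by_cases hba : b ≤ a
    · simp [sup_eq_left.mpr hba, inf_eq_right.mpr hba]
    simp only [Pi.le_def, not_forall, not_le] at hab hba
    exact Ideal.subset_span ⟨a, b, hab, hba, rfl⟩

theorem map_segreIdeal {S : Type*} [CommRing S] (f : R →+* S) :
    Ideal.map (map f) (segreIdeal (α := α) R) = segreIdeal S := by
  simp only [segreIdeal, Ideal.map_span, ← Set.range_comp]
  congr
  ext
  simp

theorem segreIdeal_eq_bot_of_isEmpty [IsEmpty ι] : segreIdeal (α := α) R = ⊥ := by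
  refine Ideal.span_eq_bot.mpr ?_
  rintro _ ⟨⟨a, b⟩, rfl⟩
  simp [Subsingleton.elim b a]

variable {R}

theorem exists_min_prod_X_sub_mem_segreIdeal {M : Multiset (∀ i, α i)} (hM : M ≠ 0) :
    ∃ (c : ∀ i, α i) (M' : Multiset (∀ i, α i)), M'.card + 1 = M.card ∧
      (∀ i, M.map (· i) = c i ::ₘ M'.map (· i)) ∧ (∀ a ∈ M, c ≤ a) ∧
      (M.map X).prod - X c * (M'.map X).prod ∈ segreIdeal R := by
  induction M using Multiset.induction_on with
  | empty => exact absurd rfl hM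
  | cons a M ih =>
    rcases eq_or_ne M 0 with rfl | hM
    · exact ⟨a, 0, by simp, by simp, by simp, by simp⟩
    obtain ⟨c, M', hcard, hcoord, hmin, hmem⟩ := ih hM
    refine ⟨a ⊓ c, (a ⊔ c) ::ₘ M', by simp [hcard], fun i => ?_, ?_, ?_⟩
    · rcases le_total (a i) (c i) with h | h
      · simp [hcoord i, h]
      · simp [hcoord i, h, Multiset.cons_swap]
    · exact Multiset.forall_mem_cons.mpr
        ⟨inf_le_left, fun b hb => inf_le_right.trans (hmin b hb)⟩
    · have key : (((a ::ₘ M).map X).prod : MvPolynomial (∀ i, α i) R) -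
            X (a ⊓ c) * (((a ⊔ c) ::ₘ M').map X).prod =
          X a * ((M.map X).prod - X c * (M'.map X).prod) +
            (X a * X c - X (a ⊔ c) * X (a ⊓ c)) * (M'.map X).prod := by
        simp only [Multiset.map_cons, Multiset.prod_cons]; ring
      rw [key]
      exact add_mem (Ideal.mul_mem_left _ _ hmem)
        (Ideal.mul_mem_right _ _ (X_mul_X_sub_mem_segreIdeal R a c))

theorem prod_X_sub_mem_segreIdeal_of_map_eq {M M' : Multiset (∀ i, α i)}
    (hcard : M.card = M'.card) (hcoord : ∀ i, M.map (· i) = M'.map (· i)) :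
    (M.map X).prod - (M'.map X).prod ∈ segreIdeal R := by
  induction hk : M.card using Nat.strong_induction_on generalizing M M' with
  | _ k ih =>
  rcases eq_or_ne M 0 with rfl | hM
  · rw [Multiset.card_zero, eq_comm, Multiset.card_eq_zero] at hcard
    simp [hcard]
  have hM' : M' ≠ 0 := by
    rintro rfl
    exact hM (Multiset.card_eq_zero.mp (hcard.trans Multiset.card_zero))
  obtain ⟨c, N, hN, hcN, hcmin, hmem⟩ := exists_min_prod_X_sub_mem_segreIdeal (R := R) hM
  obtain ⟨c', N', hN', hcN', hcmin', hmem'⟩ := exists_min_prod_X_sub_mem_segreIdeal (R := R) hM'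
  have hc : c = c' := by
    ext i
    refine le_antisymm ?_ ?_
    · obtain ⟨a, ha, hai⟩ :=
        Multiset.mem_map.mp (show c' i ∈ M.map (· i) by simp [hcoord i, hcN' i])
      exact hai ▸ hcmin a ha i
    · obtain ⟨a, ha, hai⟩ :=
        Multiset.mem_map.mp (show c i ∈ M'.map (· i) by simp [← hcoord i, hcN i])
      exact hai ▸ hcmin' a ha i
  subst hc
  have hrest : (N.map X).prod - (N'.map X).prod ∈ segreIdeal R :=
    ih N.card (by omega) (by omega) (fun i => (Multiset.cons_inj_right (c i)).mp
      (by rw [← hcN, ← hcN', hcoord])) rfl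
  have key : ((M.map X).prod : MvPolynomial (∀ i, α i) R) - (M'.map X).prod =
      ((M.map X).prod - X c * (N.map X).prod) +
      X c * ((N.map X).prod - (N'.map X).prod) - ((M'.map X).prod - X c * (N'.map X).prod) := by
    ring
  rw [key]
  exact sub_mem (add_mem hmem (Ideal.mul_mem_left _ _ hrest)) hmem'

end Straightening

section SegreMap

variable {ι : Type*} [Fintype ι] {α : ι → Type*} (R : Type*) [CommRing R]

noncomputable def segreMap : MvPolynomial (∀ i, α i) R →ₐ[R] MvPolynomial (Σ i, α i) R :=
  aeval fun a => ∏ i, X ⟨i, a i⟩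

def segreContent (M : Multiset (∀ i, α i)) : Multiset (Σ i, α i) :=
  M.bind fun a => Finset.univ.val.map fun i => ⟨i, a i⟩

theorem segreMap_prod_X (M : Multiset (∀ i, α i)) :
    segreMap R (M.map X).prod = ((segreContent M).map X).prod := by
  induction M using Multiset.induction_on with
  | empty => simp [segreContent]
  | cons a M ih =>
    rw [Multiset.map_cons, Multiset.prod_cons, map_mul, ih, segreMap, aeval_X]
    simp only [segreContent, Multiset.cons_bind, Multiset.map_add, Multiset.prod_add,
      Multiset.map_map]
    rfl

theorem card_segreContent (M : Multiset (∀ i, α i)) :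
    (segreContent M).card = M.card * Fintype.card ι := by
  simp [segreContent, Multiset.card_bind, Function.comp_def]

theorem count_segreContent [DecidableEq ι] [∀ i, DecidableEq (α i)] (M : Multiset (∀ i, α i))
    (i : ι) (j : α i) :
    (segreContent M).count ⟨i, j⟩ = (M.map (· i)).count j := by
  induction M using Multiset.induction_on with
  | empty => simp [segreContent]
  | cons a M ih =>
    have hcount : (Finset.univ.val.map fun i' => (⟨i', a i'⟩ : Σ i, α i)).count ⟨i, j⟩ =
        if j = a i then 1 else 0 := by
      split_ifs with h
      · rw [h, Multiset.count_map_eq_count' (fun i' => (⟨i', a i'⟩ : Σ i, α i)) _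
          (fun _ _ h => congrArg Sigma.fst h)]
        exact Multiset.count_eq_one_of_mem Finset.univ.nodup (Finset.mem_univ i)
      · refine Multiset.count_eq_zero.mpr fun hmem => h ?_
        obtain ⟨i', -, hi'⟩ := Multiset.mem_map.mp hmem
        cases hi'
        rfl
    simp only [segreContent, Multiset.cons_bind, Multiset.count_add, Multiset.map_cons,
      Multiset.count_cons] at ih ⊢
    rw [ih, hcount, add_comm]

theorem map_eq_of_segreContent_eq {M M' : Multiset (∀ i, α i)}
    (h : segreContent M = segreContent M') (i : ι) : M.map (· i) = M'.map (· i) := by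
  classical
  ext j
  rw [← count_segreContent, ← count_segreContent, h]

theorem monomial_one_eq_prod_X_toMultiset {σ : Type*} (s : σ →₀ ℕ) :
    monomial s (1 : R) = ((Finsupp.toMultiset s).map X).prod := by
  induction s using Finsupp.induction with
  | zero => simp
  | single_add a k s ha hk ih =>
    rw [monomial_single_add, ih, Finsupp.toMultiset_add, Finsupp.toMultiset_single]
    simp [Multiset.nsmul_singleton, Multiset.map_replicate, Multiset.prod_replicate]

variable [∀ i, LinearOrder (α i)]

theorem segreIdeal_le_ker_segreMap : segreIdeal R ≤ RingHom.ker (segreMap (α := α) R) := by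
  refine Ideal.span_le.mpr ?_
  rintro _ ⟨⟨a, b⟩, rfl⟩
  simp only [SetLike.mem_coe, RingHom.mem_ker, map_sub, map_mul, segreMap, aeval_X,
    ← Finset.prod_mul_distrib, sub_eq_zero]
  refine Finset.prod_congr rfl fun i _ => ?_
  rcases le_total (a i) (b i) with h | h
  · simp [h, mul_comm]
  · simp [h]

theorem ker_segreMap_le_segreIdeal [Nonempty ι] :
    RingHom.ker (segreMap (α := α) R) ≤ segreIdeal R := by
  classical
  let q := Ideal.Quotient.mkₐ R (segreIdeal (α := α) R)
  have hq : ∀ M M' : Multiset (∀ i, α i), segreContent M = segreContent M' →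
      q (M.map X).prod = q (M'.map X).prod := fun M M' h => by
    refine Ideal.Quotient.eq.mpr
      (prod_X_sub_mem_segreIdeal_of_map_eq ?_ (map_eq_of_segreContent_eq h))
    have := congrArg Multiset.card h
    rw [card_segreContent, card_segreContent] at this
    exact Nat.eq_of_mul_eq_mul_right Fintype.card_pos this
  -- `Ψ` sends a monomial of the image back to the class of any preimage monomial; by `hq` this
  -- is a left inverse of `segreMap` modulo the Segre ideal.
  let g : ((Σ i, α i) →₀ ℕ) → _ := fun t =>
    if h : ∃ M, segreContent M = Finsupp.toMultiset t then q (h.choose.map X).prod else 0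
  let Ψ := (basisMonomials (Σ i, α i) R).constr R g
  have hΨ : Ψ.comp (segreMap R).toLinearMap = q.toLinearMap := by
    refine (basisMonomials (∀ i, α i) R).ext fun s => ?_
    set M := Finsupp.toMultiset s
    have hM : ∃ M', segreContent M' = Finsupp.toMultiset (Multiset.toFinsupp (segreContent M)) :=
      ⟨M, by rw [Multiset.toFinsupp_toMultiset]⟩
    calc Ψ (segreMap R (monomial s 1))
        = Ψ (monomial (Multiset.toFinsupp (segreContent M)) 1) := by
          rw [monomial_one_eq_prod_X_toMultiset, segreMap_prod_X,
            monomial_one_eq_prod_X_toMultiset, Multiset.toFinsupp_toMultiset]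
      _ = q (hM.choose.map X).prod := by
          rw [← congrFun (coe_basisMonomials _ R) _, Module.Basis.constr_basis]
          exact dif_pos hM
      _ = q (monomial s 1) := by
          rw [hq _ _ (hM.choose_spec.trans (Multiset.toFinsupp_toMultiset _)),
            monomial_one_eq_prod_X_toMultiset]
  intro p hp
  rw [RingHom.mem_ker] at hp
  rw [← Ideal.Quotient.eq_zero_iff_mem, ← Ideal.Quotient.mkₐ_eq_mk R]
  calc q p = Ψ (segreMap R p) := (LinearMap.congr_fun hΨ p).symm
    _ = 0 := by rw [hp, map_zero]

theorem segreIdeal_eq_ker_segreMap [Nonempty ι] :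
    segreIdeal R = RingHom.ker (segreMap (α := α) R) :=
  le_antisymm (segreIdeal_le_ker_segreMap R) (ker_segreMap_le_segreIdeal R)

theorem segreIdeal_isRadical [IsReduced R] : (segreIdeal (α := α) R).IsRadical := by
  cases isEmpty_or_nonempty ι
  · rw [segreIdeal_eq_bot_of_isEmpty]
    exact Ideal.isRadical_bot
  · rw [segreIdeal_eq_ker_segreMap, RingHom.ker_eq_comap_bot]
    exact Ideal.isRadical_bot.comap _

end SegreMap

end MvPolynomial

/-- The complexification `I₀·ℂ[X]` of the Segre ideal
`I₀ = ⟨x_a x_b − x_{a∨b} x_{a∧b} : (a,b) ∈ S⟩ ⊆ ℝ[X]` is a radical ideal of `ℂ[X]`. -/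
theorem stmt_13 (d : ℕ) (n : Fin d → ℕ)
    (I₀ : Ideal (MvPolynomial ((i : Fin d) → Fin (n i)) ℝ))
    (hI₀ : I₀ = Ideal.span {p | ∃ a b : (i : Fin d) → Fin (n i),
      (∃ i, b i < a i) ∧ (∃ j, a j < b j) ∧
      p = MvPolynomial.X a * MvPolynomial.X b -
          MvPolynomial.X (a ⊔ b) * MvPolynomial.X (a ⊓ b)}) :
    (Ideal.map (MvPolynomial.map (algebraMap ℝ ℂ)) I₀).IsRadical := by
  rw [hI₀, MvPolynomial.span_incomparable_eq_segreIdeal, MvPolynomial.map_segreIdeal]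
  exact MvPolynomial.segreIdeal_isRadical ℂ
end

section
/- Let I₁ ⊆ ℝ[x_a : a ∈ A] (A a finite index set) be the ideal generated by Σ_{a∈A} x_a² − 1, the polynomials x_a³ − x_a for all a ∈ A, and x_a x_b for all a ≠ b. Then the real variety of I₁ equals the set of signed standard basis vectors {±e_a : a ∈ A}, and I₁ is a real radical ideal. -/
/-!
A real zero of the ideal has at most one nonzero coordinate, since `x_a x_b = 0` for `a ≠ b`,
and `∑ x_a² = 1` makes that coordinate `±1`.

Modulo the generators `x_a³ - x_a` and `x_a x_b` (`a ≠ b`), every polynomial reduces to one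
of the form `c + ∑ l_a x_a + ∑ m_a x_a²`. If it vanishes at all `±e_a`, then
`c ± l_a + m_a = 0`, so `l = 0` and `m_a = -c`: the reduced polynomial is
`-c (∑ x_a² - 1)`, which lies in the ideal.
-/

theorem Function.exists_eq_single_of_mul_eq_zero {σ M₀ : Type*} [MulZeroClass M₀]
    [NoZeroDivisors M₀] [DecidableEq σ] {x : σ → M₀} (hx : x ≠ 0)
    (h : ∀ a b, a ≠ b → x a * x b = 0) :
    ∃ a, x = Pi.single a (x a) := by
  obtain ⟨a, ha⟩ := Function.ne_iff.1 hx
  refine ⟨a, ?_⟩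
  ext b
  by_cases hb : b = a
  · subst hb; simp
  · simp only [Pi.single_apply, hb, if_false]
    exact (mul_eq_zero.1 (h b a hb)).resolve_right ha

open Finset

namespace MvPolynomial

section Reduction

variable {σ R : Type*} [Fintype σ] [CommRing R]

noncomputable def diagonalQuadratic (c : R) (l m : σ → R) : MvPolynomial σ R :=
  C c + ∑ a, C (l a) * X a + ∑ a, C (m a) * X a ^ 2

theorem diagonalQuadratic_add (c c' : R) (l l' m m' : σ → R) :
    diagonalQuadratic c l m + diagonalQuadratic c' l' m' =
      diagonalQuadratic (c + c') (l + l') (m + m') := by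
  simp only [diagonalQuadratic, Pi.add_apply, map_add, add_mul, sum_add_distrib]
  ring

theorem diagonalQuadratic_single [DecidableEq σ] (b : σ) (u v : R) :
    diagonalQuadratic 0 (Pi.single b u) (Pi.single b v) = C u * X b + C v * X b ^ 2 := by
  simp [diagonalQuadratic, apply_ite C, ite_mul, Pi.single_apply]

theorem eval_single_diagonalQuadratic [DecidableEq σ] (c : R) (l m : σ → R) (a : σ) (t : R) :
    eval (Pi.single a t) (diagonalQuadratic c l m) = c + l a * t + m a * t ^ 2 := by
  simp [diagonalQuadratic, Pi.single_apply]

variable {I : Ideal (MvPolynomial σ R)}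

theorem mk_diagonalQuadratic_mul_X [DecidableEq σ]
    (hcube : ∀ a, X a ^ 3 - X a ∈ I) (hmul : ∀ a b, a ≠ b → X a * X b ∈ I)
    (c : R) (l m : σ → R) (b : σ) :
    Ideal.Quotient.mk I (diagonalQuadratic c l m * X b) =
      Ideal.Quotient.mk I (diagonalQuadratic 0 (Pi.single b (c + m b)) (Pi.single b (l b))) := by
  set π := Ideal.Quotient.mk I
  have hcube' : π (X b) ^ 3 = π (X b) := by
    rw [← map_pow, Ideal.Quotient.eq]; exact hcube b
  have hmul' : ∀ a, a ≠ b → π (X a) * π (X b) = 0 := fun a hab => by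
    rw [← map_mul, Ideal.Quotient.eq_zero_iff_mem]; exact hmul a b hab
  rw [diagonalQuadratic_single]
  simp only [diagonalQuadratic, map_mul, map_add, map_sum, map_pow, add_mul, sum_mul]
  rw [sum_eq_single b (fun a _ hab => by rw [mul_assoc, hmul' a hab, mul_zero]) (by simp),
    sum_eq_single b (fun a _ hab => by rw [sq, mul_assoc, mul_assoc, hmul' a hab]; simp) (by simp)]
  linear_combination π (C (m b)) * hcube'

theorem exists_diagonalQuadratic_sub_mem
    (hcube : ∀ a, X a ^ 3 - X a ∈ I) (hmul : ∀ a b, a ≠ b → X a * X b ∈ I)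
    (p : MvPolynomial σ R) : ∃ c l m, p - diagonalQuadratic c l m ∈ I := by
  classical
  simp only [← Ideal.Quotient.eq]
  induction p using MvPolynomial.induction_on with
  | C r => exact ⟨r, 0, 0, by simp [diagonalQuadratic]⟩
  | add p q hp hq =>
    obtain ⟨c, l, m, hp⟩ := hp
    obtain ⟨c', l', m', hq⟩ := hq
    exact ⟨c + c', l + l', m + m', by rw [map_add, hp, hq, ← map_add, diagonalQuadratic_add]⟩
  | mul_X p b hp =>
    obtain ⟨c, l, m, hp⟩ := hp
    exact ⟨_, _, _, by rw [map_mul, hp, ← map_mul, mk_diagonalQuadratic_mul_X hcube hmul]⟩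

end Reduction

section SignedBasis

variable (σ : Type*) [Fintype σ]

noncomputable def signedBasisIdeal (R : Type*) [CommRing R] : Ideal (MvPolynomial σ R) :=
  Ideal.span ({(∑ a : σ, X a ^ 2) - 1} ∪ {p | ∃ a, p = X a ^ 3 - X a} ∪
    {p | ∃ a b, a ≠ b ∧ p = X a * X b})

def signedBasisVectors [DecidableEq σ] (R : Type*) [Ring R] : Set (σ → R) :=
  {x | ∃ a, x = Pi.single a 1 ∨ x = Pi.single a (-1)}

variable {σ} {R : Type*} [CommRing R]

theorem sum_X_sq_sub_one_mem_signedBasisIdeal :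
    (∑ a : σ, X a ^ 2) - 1 ∈ signedBasisIdeal σ R :=
  Ideal.subset_span (Or.inl (Or.inl rfl))

theorem X_pow_three_sub_X_mem_signedBasisIdeal (a : σ) : X a ^ 3 - X a ∈ signedBasisIdeal σ R :=
  Ideal.subset_span (Or.inl (Or.inr ⟨a, rfl⟩))

theorem X_mul_X_mem_signedBasisIdeal {a b : σ} (hab : a ≠ b) :
    X a * X b ∈ signedBasisIdeal σ R :=
  Ideal.subset_span (Or.inr ⟨a, b, hab, rfl⟩)

theorem signedBasisIdeal_le_ker_eval_single [DecidableEq σ] (a : σ) {t : R} (ht : t ^ 2 = 1) :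
    signedBasisIdeal σ R ≤ RingHom.ker (eval (Pi.single a t)) := by
  rw [signedBasisIdeal, Ideal.span_le]
  rintro _ ((rfl | ⟨b, rfl⟩) | ⟨b, b', hbb', rfl⟩)
  · simp [Pi.single_apply, ht]
  · by_cases hb : b = a
    · subst hb
      simp [show t ^ 3 = t * t ^ 2 by ring, ht]
    · simp [hb]
  · by_cases hb : b = a
    · subst hb
      simp [Ne.symm hbb']
    · simp [hb]

variable {K : Type*} [Field K]

theorem zeroLocus_signedBasisIdeal [DecidableEq σ] :
    zeroLocus K (signedBasisIdeal σ K) = signedBasisVectors σ K := by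
  ext x
  constructor
  · intro hx
    have hsum : ∑ a, x a ^ 2 = 1 := by
      simpa [sub_eq_zero] using hx _ sum_X_sq_sub_one_mem_signedBasisIdeal
    have hmul : ∀ a b, a ≠ b → x a * x b = 0 := fun a b hab => by
      simpa using hx _ (X_mul_X_mem_signedBasisIdeal hab)
    have hx0 : x ≠ 0 := by rintro rfl; simp at hsum
    obtain ⟨a, hxa⟩ := Function.exists_eq_single_of_mul_eq_zero hx0 hmul
    have hsq : x a ^ 2 = 1 := by
      rw [hxa] at hsum; simpa [Pi.single_apply] using hsum
    exact ⟨a, (sq_eq_one_iff.1 hsq).imp (fun h => by rwa [h] at hxa) fun h => by rwa [h] at hxa⟩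
  · rintro ⟨a, rfl | rfl⟩ p hp
    · exact signedBasisIdeal_le_ker_eval_single a (one_pow 2) hp
    · exact signedBasisIdeal_le_ker_eval_single a neg_one_sq hp

theorem diagonalQuadratic_mem_signedBasisIdeal [DecidableEq σ] (h2 : (2 : K) ≠ 0)
    {c : K} {l m : σ → K}
    (h : diagonalQuadratic c l m ∈ vanishingIdeal K (signedBasisVectors σ K)) :
    diagonalQuadratic c l m ∈ signedBasisIdeal σ K := by
  have hpos : ∀ a, c + l a + m a = 0 := fun a => by
    simpa [eval_single_diagonalQuadratic] using h _ ⟨a, Or.inl rfl⟩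
  have hneg : ∀ a, c - l a + m a = 0 := fun a => by
    simpa [eval_single_diagonalQuadratic, sub_eq_add_neg] using h _ ⟨a, Or.inr rfl⟩
  have hl : l = 0 := by
    ext a
    have : 2 * l a = 0 := by linear_combination hpos a - hneg a
    simpa [h2] using this
  have hm : m = fun _ => -c := by
    ext a
    simpa [hl, add_eq_zero_iff_eq_neg'] using hpos a
  have : diagonalQuadratic c l m = -C c * ((∑ a : σ, X a ^ 2) - 1) := by
    simp only [diagonalQuadratic, hl, hm, Pi.zero_apply, C_0, zero_mul, sum_const_zero, add_zero,
      C_neg, neg_mul, sum_neg_distrib, mul_sub, mul_sum, mul_one]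
    ring
  rw [this]
  exact Ideal.mul_mem_left _ _ sum_X_sq_sub_one_mem_signedBasisIdeal

theorem vanishingIdeal_signedBasisVectors [DecidableEq σ] (h2 : (2 : K) ≠ 0) :
    vanishingIdeal K (signedBasisVectors σ K) = signedBasisIdeal σ K := by
  have hle : signedBasisIdeal σ K ≤ vanishingIdeal K (signedBasisVectors σ K) := by
    rw [← zeroLocus_signedBasisIdeal]
    exact le_vanishingIdeal_zeroLocus _
  refine le_antisymm (fun p hp => ?_) hle
  obtain ⟨c, l, m, hpq⟩ := exists_diagonalQuadratic_sub_mem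
    X_pow_three_sub_X_mem_signedBasisIdeal (fun _ _ => X_mul_X_mem_signedBasisIdeal) p
  have hq := diagonalQuadratic_mem_signedBasisIdeal h2 (by simpa using sub_mem hp (hle hpq))
  simpa using add_mem hpq hq

end SignedBasis

end MvPolynomial

/-- For `I₁ = ⟨Σ x_a² − 1, x_a³ − x_a, x_a x_b (a ≠ b)⟩ ⊆ ℝ[x_a : a ∈ A]`:
the real variety of `I₁` is the set of signed standard basis vectors `{±e_a}`, and
`I₁` is real radical, i.e. `I₁` equals the vanishing ideal of its real variety. -/
theorem stmt_14 (A : Type*) [Fintype A] [DecidableEq A]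
    (I₁ : Ideal (MvPolynomial A ℝ))
    (hI₁ : I₁ = Ideal.span ({(∑ a : A, (MvPolynomial.X a) ^ 2) - 1} ∪
      {p | ∃ a : A, p = (MvPolynomial.X a) ^ 3 - MvPolynomial.X a} ∪
      {p | ∃ a b : A, a ≠ b ∧ p = MvPolynomial.X a * MvPolynomial.X b})) :
    MvPolynomial.zeroLocus ℝ I₁ =
      {x : A → ℝ | ∃ a : A, x = Pi.single a 1 ∨ x = Pi.single a (-1)} ∧
    MvPolynomial.vanishingIdeal ℝ (MvPolynomial.zeroLocus ℝ I₁) = I₁ := by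
  obtain rfl : I₁ = MvPolynomial.signedBasisIdeal A ℝ := hI₁
  rw [MvPolynomial.zeroLocus_signedBasisIdeal]
  exact ⟨rfl, MvPolynomial.vanishingIdeal_signedBasisVectors two_ne_zero⟩
end

section
/- For matrices of size n₁ × n₂ (d = 2), let I₂ ⊆ ℝ[x_{ij}] be generated by Σ_{i,j} x_{ij}² − 1 together with all 2×2 minors x_{ij}x_{kl} − x_{il}x_{kj} (i < k, j < l). Then the real point y = e₁e₁ᵀ (i.e., x₁₁ = 1 and all other coordinates 0) lies in the real variety of I₂, and the Jacobian matrix of the given generators at y has rank n₁·n₂ − (n₁ + n₂ − 2). -/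
/-!
At `y = e₁₁` every variable with row index `i' > 1` or column index `j' > 1` vanishes. So the
gradient of the sphere equation is `2 e₁₁`, the gradient of the minor on rows `i < i'` and columns
`j < j'` is `y_{ij} e_{i'j'}`, and `y` kills all generators. Every row of the Jacobian is thus a
multiple of a standard basis vector, and its rank counts the positions hit with a nonzero
coefficient: `(1, 1)` and the `(n₁ - 1)(n₂ - 1)` positions with both indices `> 1`.
-/

open MvPolynomial

theorem Matrix.rank_eq_ncard_of_row_eq_single {m n K : Type*} [Fintype m] [Fintype n]
    [DecidableEq n] [Field K] (M : Matrix m n K) (col : m → n) (c : m → K)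
    (hM : ∀ r, M.row r = Pi.single (col r) (c r)) :
    M.rank = (col '' {r | c r ≠ 0}).ncard := by
  classical
  set S := col '' {r | c r ≠ 0}
  have hrow : ∀ r, M.row r = c r • Pi.single (col r) 1 := fun r => by
    rw [hM, ← Pi.single_smul', smul_eq_mul, mul_one]
  have hspan : Submodule.span K (Set.range M.row) =
      Submodule.span K (Set.range fun p : S => (Pi.single (p : n) 1 : n → K)) := by
    apply le_antisymm <;> rw [Submodule.span_le]
    · rintro _ ⟨r, rfl⟩
      rw [hrow]
      by_cases hr : c r = 0
      · simp [hr]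
      · exact Submodule.smul_mem _ _ (Submodule.subset_span ⟨⟨col r, r, hr, rfl⟩, rfl⟩)
    · rintro _ ⟨⟨_, r, hr, rfl⟩, rfl⟩
      have hsingle : (Pi.single (col r) 1 : n → K) = (c r)⁻¹ • M.row r := by
        rw [hrow, smul_smul, inv_mul_cancel₀ hr, one_smul]
      simp only [hsingle]
      exact Submodule.smul_mem _ _ (Submodule.subset_span ⟨r, rfl⟩)
  have hli : LinearIndependent K fun p : S => (Pi.single (p : n) 1 : n → K) := by
    convert (Pi.basisFun K n).linearIndependent.comp _ Subtype.val_injective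
    simp
  rw [rank_eq_finrank_span_row, hspan, finrank_span_eq_card hli, ← Nat.card_eq_fintype_card,
    Nat.card_coe_set_eq]

theorem Set.ncard_insert_compl_prod_compl {ι κ : Type*} [Finite ι] [Finite κ] (a : ι) (b : κ) :
    (insert (a, b) ({a}ᶜ ×ˢ {b}ᶜ) : Set (ι × κ)).ncard =
      Nat.card ι * Nat.card κ - (Nat.card ι + Nat.card κ - 2) := by
  have : Nonempty ι := ⟨a⟩
  have : Nonempty κ := ⟨b⟩
  obtain ⟨p, hp⟩ := Nat.exists_eq_add_one_of_ne_zero (Nat.card_pos (α := ι)).ne'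
  obtain ⟨q, hq⟩ := Nat.exists_eq_add_one_of_ne_zero (Nat.card_pos (α := κ)).ne'
  rw [ncard_insert_of_notMem (by simp), ncard_prod, ncard_compl, ncard_compl, ncard_singleton,
    ncard_singleton, hp, hq, Nat.add_sub_cancel, Nat.add_sub_cancel]
  have : (p + 1) * (q + 1) = p * q + p + q + 1 := by ring
  omega

namespace MvPolynomial

variable {σ ι κ R : Type*} [CommRing R]

noncomputable def evalGradient (x : σ → R) (f : MvPolynomial σ R) : σ → R :=
  fun p => eval x (pderiv p f)

theorem evalGradient_sub (x : σ → R) (f g : MvPolynomial σ R) :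
    evalGradient x (f - g) = evalGradient x f - evalGradient x g := by
  ext p
  simp [evalGradient]

theorem evalGradient_X_mul_X [DecidableEq σ] (x : σ → R) (a b : σ) :
    evalGradient x (X a * X b) = Pi.single a (x b) + Pi.single b (x a) := by
  ext p
  simp only [evalGradient, pderiv_mul, pderiv_X, map_add, map_mul, eval_X, Pi.add_apply,
    Pi.single_apply, eq_comm (a := p)]
  split_ifs <;> simp [mul_comm]

theorem evalGradient_sum_X_sq_sub_one [Fintype σ] (x : σ → R) :
    evalGradient x (∑ p, X p ^ 2 - 1) = 2 • x := by
  classical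
  ext p
  simp [evalGradient, pderiv_X, Pi.single_apply, mul_comm]

noncomputable def minor (i i' : ι) (j j' : κ) : MvPolynomial (ι × κ) R :=
  X (i, j) * X (i', j') - X (i, j') * X (i', j)

theorem eval_minor_of_row_eq_zero (x : ι × κ → R) (i i' : ι) (j j' : κ)
    (hi' : ∀ j, x (i', j) = 0) : eval x (minor i i' j j') = 0 := by
  simp [minor, hi']

theorem evalGradient_minor_of_row_col_eq_zero [DecidableEq ι] [DecidableEq κ]
    (x : ι × κ → R) (i i' : ι) (j j' : κ) (hi' : ∀ j, x (i', j) = 0) (hj' : ∀ i, x (i, j') = 0) :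
    evalGradient x (minor i i' j j') = Pi.single (i', j') (x (i, j)) := by
  simp [minor, evalGradient_sub, evalGradient_X_mul_X, hi', hj']

end MvPolynomial

abbrev MinorIndex (ι κ : Type*) [LT ι] [LT κ] :=
  {q : (ι × ι) × (κ × κ) // q.1.1 < q.1.2 ∧ q.2.1 < q.2.2}

/-- The two `Option.elim`s give the position and the value of the only possibly nonzero entry of the
Jacobian row of generator `r` at `e_{i₀j₀}`. -/
theorem image_pivot_eq_insert_compl_prod_compl {ι κ : Type*} [LinearOrder ι] [LinearOrder κ]
    {i₀ : ι} {j₀ : κ} (hi₀ : IsBot i₀) (hj₀ : IsBot j₀) :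
    (fun r : Option (MinorIndex ι κ) => r.elim (i₀, j₀) fun q => (q.1.1.2, q.1.2.2)) ''
        {r | r.elim 2 (fun q => (Pi.single (i₀, j₀) 1 : ι × κ → ℝ) (q.1.1.1, q.1.2.1)) ≠ 0} =
      insert (i₀, j₀) ({i₀}ᶜ ×ˢ {j₀}ᶜ) := by
  ext ⟨i, j⟩
  simp only [Set.mem_image, Set.mem_ofPred_eq, Set.mem_insert_iff, Set.mem_prod,
    Set.mem_compl_singleton_iff]
  constructor
  · rintro ⟨_ | ⟨⟨⟨i₁, i₂⟩, j₁, j₂⟩, hi, hj⟩, hc, hp⟩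
    · exact Or.inl hp.symm
    · obtain ⟨rfl, rfl⟩ : i₁ = i₀ ∧ j₁ = j₀ := by
        by_contra h
        exact hc (Pi.single_eq_of_ne (by simpa using h) _)
      obtain ⟨rfl, rfl⟩ := Prod.mk.inj hp
      exact Or.inr ⟨hi.ne', hj.ne'⟩
  · rintro (h | ⟨hi, hj⟩)
    · exact ⟨none, two_ne_zero, h.symm⟩
    · exact ⟨some ⟨((i₀, i), (j₀, j)), (hi₀ i).lt_of_ne' hi, (hj₀ j).lt_of_ne' hj⟩, by simp, rfl⟩

/-- For `n₁ × n₂` matrices, with `I₂ = ⟨Σ x_{ij}² − 1, 2×2 minors⟩`, the point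
`y = e₁e₁ᵀ` lies in the real variety of `I₂`, and the Jacobian of the given
generators at `y` has rank `n₁n₂ − (n₁ + n₂ − 2)`. -/
theorem stmt_16 (n₁ n₂ : ℕ) (h₁ : 0 < n₁) (h₂ : 0 < n₂)
    (gen : Option {q : (Fin n₁ × Fin n₁) × (Fin n₂ × Fin n₂) //
        q.1.1 < q.1.2 ∧ q.2.1 < q.2.2} →
      MvPolynomial (Fin n₁ × Fin n₂) ℝ)
    (hgen : gen = fun r => r.elim
      ((∑ p : Fin n₁ × Fin n₂, (MvPolynomial.X p) ^ 2) - 1)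
      (fun q => MvPolynomial.X (q.1.1.1, q.1.2.1) * MvPolynomial.X (q.1.1.2, q.1.2.2) -
        MvPolynomial.X (q.1.1.1, q.1.2.2) * MvPolynomial.X (q.1.1.2, q.1.2.1)))
    (I₂ : Ideal (MvPolynomial (Fin n₁ × Fin n₂) ℝ))
    (hI₂ : I₂ = Ideal.span (Set.range gen))
    (y : Fin n₁ × Fin n₂ → ℝ)
    (hy : y = Pi.single ((⟨0, h₁⟩ : Fin n₁), (⟨0, h₂⟩ : Fin n₂)) 1) :
    y ∈ MvPolynomial.zeroLocus ℝ I₂ ∧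
    Matrix.rank (Matrix.of fun r p =>
        MvPolynomial.eval y (MvPolynomial.pderiv p (gen r))) =
      n₁ * n₂ - (n₁ + n₂ - 2) := by
  subst hgen hI₂ hy
  have hbot₁ : IsBot (⟨0, h₁⟩ : Fin n₁) := fun _ => Nat.zero_le _
  have hbot₂ : IsBot (⟨0, h₂⟩ : Fin n₂) := fun _ => Nat.zero_le _
  have hrow {i i' : Fin n₁} (hi : i < i') (j : Fin n₂) :
      (Pi.single (⟨0, h₁⟩, ⟨0, h₂⟩) 1 : Fin n₁ × Fin n₂ → ℝ) (i', j) = 0 :=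
    Pi.single_eq_of_ne (fun h => ((hbot₁ i).trans_lt hi).ne' (congrArg Prod.fst h)) _
  have hcol {j j' : Fin n₂} (hj : j < j') (i : Fin n₁) :
      (Pi.single (⟨0, h₁⟩, ⟨0, h₂⟩) 1 : Fin n₁ × Fin n₂ → ℝ) (i, j') = 0 :=
    Pi.single_eq_of_ne (fun h => ((hbot₂ j).trans_lt hj).ne' (congrArg Prod.snd h)) _
  constructor
  · rw [zeroLocus_span]
    rintro _ ⟨(_ | ⟨⟨⟨i, i'⟩, j, j'⟩, hi, hj⟩), rfl⟩
    · simp [Pi.single_apply]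
    · exact eval_minor_of_row_eq_zero _ i i' j j' (hrow hi)
  · rw [Matrix.rank_eq_ncard_of_row_eq_single _ _ _ ?_,
      image_pivot_eq_insert_compl_prod_compl hbot₁ hbot₂, Set.ncard_insert_compl_prod_compl,
      Nat.card_fin, Nat.card_fin]
    rintro (_ | ⟨⟨⟨i, i'⟩, j, j'⟩, hi, hj⟩)
    · exact (evalGradient_sum_X_sq_sub_one _).trans (by simp [← Pi.single_smul'])
    · exact evalGradient_minor_of_row_col_eq_zero _ i i' j j' (hrow hi) (hcol hj)
end

section
/- Let d ≥ 1, n = (n₁,…,n_d), and let J = {a ∈ [n₁]×⋯×[n_d] : at most one coordinate a_i ≠ 1} \ {(1,…,1,n_d)}. Let I₂ be the ideal generated by Σ_a x_a² − 1 and the rank-one binomials x_a x_b − x_{a∨b} x_{a∧b}. Then I₂ ∩ ℝ[x_a : a ∈ J] = {0}; i.e., J is algebraically independent with respect to I₂, and |J| = Σᵢ nᵢ − d. -/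
/-!
Every unit-norm rank-one tensor `z = r • ⊗ᵢ vᵢ` is a real zero of `I₂`. Normalising the factors
to `1` at the base index `o = (1,…,1)` shows that a rank-one tensor can take arbitrary values on
the axis indices `a ≠ o` (and the value `r` at `o`). The constraint `∑ z_a² = 1` is then met by
the intermediate value theorem, varying the single coordinate `c` that is not in `J` (the scale `r`
if `c = o`): at one end the norm is `< 1` on an open set of data, at the other the `c`-entry alone
is `1`. So the projection of the real variety of `I₂` to `ℝ^J` has nonempty interior, and a
polynomial vanishing on a nonempty open set is zero.
-/

open MvPolynomial Function Set

namespace MvPolynomial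

variable {σ : Type*} {f : MvPolynomial σ ℝ}

theorem eval_eq_of_eqOn_of_mem_supported {R : Type*} [CommSemiring R] {p : MvPolynomial σ R}
    {s : Set σ} (hp : p ∈ supported R s) {x y : σ → R} (hxy : EqOn x y s) :
    eval x p = eval y p :=
  hom_congr_vars (by ext; simp) (fun _ hi _ => by simpa using hxy (mem_supported.mp hp hi)) rfl

theorem eq_zero_of_eval_eq_zero_on_isOpen [Finite σ] {U : Set (σ → ℝ)} (hU : IsOpen U)
    (hne : U.Nonempty) (h : ∀ x ∈ U, eval x f = 0) : f = 0 := by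
  have := Fintype.ofFinite σ
  obtain ⟨x, hx⟩ := hne
  obtain ⟨ε, hε, hball⟩ := Metric.isOpen_iff.mp hU x hx
  refine funext_set (fun i => Metric.ball (x i) ε) (fun i => ?_) fun y hy => ?_
  · rw [Real.ball_eq_Ioo]
    exact Ioo_infinite (by linarith)
  · rw [← ball_pi x hε] at hy
    simpa using h y (hball hy)

theorem eq_zero_of_mem_supported_of_interior_nonempty [Finite σ] {V : Set (σ → ℝ)} {J : Set σ}
    (hV : (interior {x | ∃ z ∈ V, EqOn z x J}).Nonempty) (hf : f ∈ supported ℝ J)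
    (h : ∀ z ∈ V, eval z f = 0) : f = 0 := by
  refine eq_zero_of_eval_eq_zero_on_isOpen isOpen_interior hV fun x hx => ?_
  obtain ⟨z, hz, hzx⟩ := interior_subset hx
  rw [← eval_eq_of_eqOn_of_mem_supported hf hzx, h z hz]

end MvPolynomial

theorem exists_mem_Icc_sum_sq_eq_one {σ : Type*} [Fintype σ] {γ : ℝ → σ → ℝ} {a b : ℝ}
    (hab : a ≤ b) (hγ : ContinuousOn γ (Icc a b)) (ha : ∑ s, γ a s ^ 2 ≤ 1) {s₀ : σ}
    (hb : γ b s₀ = 1) : ∃ t ∈ Icc a b, ∑ s, γ t s ^ 2 = 1 := by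
  have hb' : 1 ≤ ∑ s, γ b s ^ 2 := by
    simpa [hb] using Finset.single_le_sum (fun s _ => sq_nonneg (γ b s)) (Finset.mem_univ s₀)
  refine intermediate_value_Icc hab ?_ ⟨ha, hb'⟩
  exact continuousOn_finsetSum _ fun s _ => ((continuous_apply s).comp_continuousOn hγ).pow 2

section RankOne

variable {ι : Type*} [Fintype ι] {κ : ι → Type*}

def rankOne {R : Type*} [CommMonoid R] (v : ∀ i, κ i → R) (a : ∀ i, κ i) : R := ∏ i, v i (a i)

theorem rankOne_sup_mul_rankOne_inf {R : Type*} [CommMonoid R] [∀ i, LinearOrder (κ i)]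
    (v : ∀ i, κ i → R) (a b : ∀ i, κ i) :
    rankOne v (a ⊔ b) * rankOne v (a ⊓ b) = rankOne v a * rankOne v b := by
  simp only [rankOne, ← Finset.prod_mul_distrib]
  refine Finset.prod_congr rfl fun i _ => ?_
  rcases le_total (a i) (b i) with h | h
  · rw [Pi.sup_apply, Pi.inf_apply, sup_of_le_right h, inf_of_le_left h, mul_comm]
  · rw [Pi.sup_apply, Pi.inf_apply, sup_of_le_left h, inf_of_le_right h]

theorem sum_rankOne_sq {R : Type*} [CommSemiring R] [DecidableEq ι] [∀ i, Fintype (κ i)]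
    (v : ∀ i, κ i → R) : ∑ a, rankOne v a ^ 2 = ∏ i, ∑ j, v i j ^ 2 := by
  rw [Finset.prod_univ_sum, Fintype.piFinset_univ]
  simp only [rankOne, Finset.prod_pow]

theorem rankOne_update {R : Type*} [CommMonoid R] [DecidableEq ι] {v : ∀ i, κ i → R}
    {o : ∀ i, κ i} (hv : ∀ i, v i (o i) = 1) (k : ι) (j : κ k) :
    rankOne v (update o k j) = v k j := by
  rw [rankOne, Fintype.prod_eq_single k fun i hi => by rw [update_of_ne hi, hv], update_self]

variable [DecidableEq ι] [∀ i, Fintype (κ i)]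

variable (R : Type*) [CommRing R]

def unitRankOneTensors : Set ((∀ i, κ i) → R) :=
  {z | (∃ (r : R) (v : ∀ i, κ i → R), z = r • rankOne v) ∧ ∑ a, z a ^ 2 = 1}

noncomputable def rankOneSphereIdeal [∀ i, LinearOrder (κ i)] :
    Ideal (MvPolynomial (∀ i, κ i) R) :=
  Ideal.span ({∑ a, X a ^ 2 - 1} ∪ {p | ∃ a b, p = X a * X b - X (a ⊔ b) * X (a ⊓ b)})

variable {R}

theorem eval_eq_zero_of_mem_rankOneSphereIdeal [∀ i, LinearOrder (κ i)] {z : (∀ i, κ i) → R}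
    (hz : z ∈ unitRankOneTensors R) {f : MvPolynomial (∀ i, κ i) R}
    (hf : f ∈ rankOneSphereIdeal R) : eval z f = 0 := by
  obtain ⟨⟨r, v, rfl⟩, hnorm⟩ := hz
  refine (Ideal.span_le (I := RingHom.ker (MvPolynomial.eval _)).mpr ?_ hf : _)
  rintro p (rfl | ⟨a, b, rfl⟩)
  · simpa [sub_eq_zero] using hnorm
  · simp only [SetLike.mem_coe, RingHom.mem_ker, map_sub, map_mul, eval_X, Pi.smul_apply,
      smul_eq_mul, sub_eq_zero]
    linear_combination -r ^ 2 * rankOne_sup_mul_rankOne_inf v a b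

end RankOne

section Axis

variable {ι : Type*} [DecidableEq ι] {κ : ι → Type*}

def axisIndices (o : ∀ i, κ i) : Set (∀ i, κ i) := {a | {i | a i ≠ o i}.Subsingleton}

variable {o a : ∀ i, κ i}

theorem update_mem_axisIndices (k : ι) (j : κ k) : update o k j ∈ axisIndices o := by
  intro i₁ h₁ i₂ h₂
  by_contra hne
  rcases eq_or_ne i₁ k with rfl | h
  · exact h₂ (update_of_ne (Ne.symm hne) j o)
  · exact h₁ (update_of_ne h j o)

theorem eq_update_of_mem_axisIndices (ha : a ∈ axisIndices o) {k : ι} (hk : a k ≠ o k) :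
    a = update o k (a k) := by
  funext i
  rcases eq_or_ne i k with rfl | hik
  · rw [update_self]
  · rw [update_of_ne hik]
    by_contra hne
    exact hik (ha hne hk)

theorem axisIndices_diff_base :
    axisIndices o \ {o} = range fun p : Σ i, {j : κ i // j ≠ o i} => update o p.1 p.2 := by
  ext a
  constructor
  · rintro ⟨ha, hao : a ≠ o⟩
    obtain ⟨k, hk⟩ : ∃ k, a k ≠ o k := by simpa [funext_iff] using hao
    exact ⟨⟨k, a k, hk⟩, (eq_update_of_mem_axisIndices ha hk).symm⟩
  · rintro ⟨⟨k, j, hj⟩, rfl⟩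
    refine ⟨update_mem_axisIndices k j, fun h => hj ?_⟩
    simpa using congr_fun h k

theorem ncard_axisIndices_diff_singleton [Fintype ι] [∀ i, Fintype (κ i)] {c : ∀ i, κ i}
    (hc : c ∈ axisIndices o) :
    (axisIndices o \ {c}).ncard = ∑ i, (Fintype.card (κ i) - 1) := by
  have ho : o ∈ axisIndices o := fun i h => absurd rfl h
  have hinj : Injective fun p : Σ i, {j : κ i // j ≠ o i} => update o p.1 p.2 := by
    rintro ⟨k, j, hj⟩ ⟨k', j', hj'⟩ h
    obtain rfl : k = k' := by
      by_contra hkk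
      exact hj (by simpa [update_of_ne hkk] using congr_fun h k)
    simpa using congr_fun h k
  classical
  rw [ncard_sdiff_singleton_of_mem hc, ← ncard_sdiff_singleton_of_mem ho, axisIndices_diff_base,
    ncard_range_of_injective hinj, Nat.card_sigma]
  simp [Fintype.card_subtype_compl]

end Axis

section AxisLift

variable {ι : Type*} [Fintype ι] [DecidableEq ι] {κ : ι → Type*} [∀ i, DecidableEq (κ i)]
  {o a : ∀ i, κ i} {x : (∀ i, κ i) → ℝ} {r : ℝ}

noncomputable def axisLift (o : ∀ i, κ i) (x : (∀ i, κ i) → ℝ) (r : ℝ) : (∀ i, κ i) → ℝ :=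
  r • rankOne fun i j => if j = o i then 1 else x (update o i j) / r

theorem axisLift_apply_base : axisLift o x r o = r := by
  simp [axisLift, rankOne]

theorem axisLift_apply_of_mem (hr : r ≠ 0) (ha : a ∈ axisIndices o) (hao : a ≠ o) :
    axisLift o x r a = x a := by
  obtain ⟨k, hk⟩ : ∃ k, a k ≠ o k := by simpa [funext_iff] using hao
  rw [eq_update_of_mem_axisIndices ha hk, axisLift, Pi.smul_apply,
    rankOne_update (by simp), if_neg hk, smul_eq_mul, mul_div_cancel₀ _ hr]

theorem sum_axisLift_sq_of_eq_zero [∀ i, Fintype (κ i)] (hx : ∀ a, a ≠ o → x a = 0) :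
    ∑ a, axisLift o x r a ^ 2 = r ^ 2 := by
  have hv : ∀ i j, (if j = o i then 1 else x (update o i j) / r) = if j = o i then 1 else 0 := by
    intro i j
    by_cases hj : j = o i
    · simp [hj]
    · rw [if_neg hj, if_neg hj, hx _ fun h => hj (by simpa using congr_fun h i),
        zero_div]
  simp only [axisLift, Pi.smul_apply, smul_eq_mul, mul_pow, ← Finset.mul_sum, sum_rankOne_sq, hv]
  simp

theorem continuousOn_axisLift :
    ContinuousOn (fun p : ((∀ i, κ i) → ℝ) × ℝ => axisLift o p.1 p.2) {p | p.2 ≠ 0} := by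
  refine continuousOn_pi.2 fun a => continuousOn_snd.mul <|
    continuousOn_finsetProd _ fun i _ => ?_
  by_cases h : a i = o i
  · simpa only [if_pos h] using continuousOn_const
  · simp only [if_neg h]
    exact ((continuous_apply _).comp continuous_fst).continuousOn.div continuousOn_snd
      fun _ hp => hp

end AxisLift

section Projection

variable {ι : Type*} [Fintype ι] [DecidableEq ι] {κ : ι → Type*} [∀ i, Fintype (κ i)]
  [∀ i, DecidableEq (κ i)] {o c : ∀ i, κ i}

theorem interior_unitRankOneTensors_eqOn_diff_base_nonempty :
    (interior {x | ∃ z ∈ unitRankOneTensors ℝ, EqOn z x (axisIndices o \ {o})}).Nonempty := by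
  have hF : Continuous fun x => ∑ a, axisLift o x (1 / 2) a ^ 2 :=
    continuous_finsetSum _ fun a _ => ((continuous_apply a).comp <|
      continuousOn_axisLift.comp_continuous (continuous_id.prodMk continuous_const)
        fun _ => by norm_num).pow 2
  refine ⟨0, mem_interior.2 ⟨_, fun x hx => ?_, (isOpen_Iio (a := 1)).preimage hF, ?_⟩⟩
  · have hγ : ContinuousOn (axisLift o x) (Icc (1 / 2) 1) :=
      continuousOn_axisLift.comp (continuous_const.prodMk continuous_id).continuousOn
        fun r hr => show r ≠ 0 by linarith [hr.1]
    obtain ⟨r, hr, hsum⟩ := exists_mem_Icc_sum_sq_eq_one (by norm_num) hγ (le_of_lt hx)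
      axisLift_apply_base
    have hr0 : r ≠ 0 := by linarith [hr.1]
    exact ⟨axisLift o x r, ⟨⟨_, _, rfl⟩, hsum⟩, fun a ha => axisLift_apply_of_mem hr0 ha.1 ha.2⟩
  · show ∑ a, axisLift o 0 (1 / 2) a ^ 2 < 1
    rw [sum_axisLift_sq_of_eq_zero fun _ _ => Pi.zero_apply _]
    norm_num

theorem interior_unitRankOneTensors_eqOn_diff_nonempty_of_ne (hc : c ∈ axisIndices o)
    (hco : c ≠ o) :
    (interior {x | ∃ z ∈ unitRankOneTensors ℝ, EqOn z x (axisIndices o \ {c})}).Nonempty := by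
  have hγ : ∀ x : (∀ i, κ i) → ℝ, x o ≠ 0 →
      Continuous fun w => axisLift o (update x c w) (x o) := fun x hxo =>
    continuousOn_axisLift.comp_continuous ((continuous_const.update c continuous_id).prodMk
      continuous_const) fun _ => hxo
  have hF : ContinuousOn (fun x => ∑ a, axisLift o (update x c 0) (x o) a ^ 2) {x | x o ≠ 0} :=
    continuousOn_finsetSum _ fun a _ => ((continuous_apply a).comp_continuousOn <|
      continuousOn_axisLift.comp ((continuous_id.update c continuous_const).prodMk
        (continuous_apply o)).continuousOn fun _ hx => hx).pow 2
  refine ⟨Pi.single o (1 / 2), mem_interior.2 ⟨_, fun x hx => ?_, hF.isOpen_inter_preimage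
    (isOpen_ne_fun (continuous_apply o) continuous_const) (isOpen_Iio (a := 1)), ?_⟩⟩
  · obtain ⟨hxo, hx⟩ := hx
    obtain ⟨w, -, hsum⟩ := exists_mem_Icc_sum_sq_eq_one zero_le_one (hγ x hxo).continuousOn
      (le_of_lt hx) (s₀ := c) (by rw [axisLift_apply_of_mem hxo hc hco, update_self])
    refine ⟨axisLift o (update x c w) (x o), ⟨⟨_, _, rfl⟩, hsum⟩, fun a ⟨ha, hac⟩ => ?_⟩
    rcases eq_or_ne a o with rfl | hao
    · exact axisLift_apply_base
    · rw [axisLift_apply_of_mem hxo ha hao, update_of_ne hac]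
  · refine ⟨by simp, ?_⟩
    show ∑ a, axisLift o _ _ a ^ 2 < 1
    rw [sum_axisLift_sq_of_eq_zero fun a hao => ?_]
    · norm_num
    · rcases eq_or_ne a c with rfl | hac
      · exact update_self ..
      · rw [update_of_ne hac, Pi.single_eq_of_ne hao]

theorem interior_unitRankOneTensors_eqOn_diff_nonempty (hc : c ∈ axisIndices o) :
    (interior {x | ∃ z ∈ unitRankOneTensors ℝ, EqOn z x (axisIndices o \ {c})}).Nonempty := by
  rcases eq_or_ne c o with rfl | hco
  · exact interior_unitRankOneTensors_eqOn_diff_base_nonempty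
  · exact interior_unitRankOneTensors_eqOn_diff_nonempty_of_ne hc hco

end Projection

/-- Let `J` be the set of multi-indices with at most one coordinate `≠ 1`, minus the
index `(1,…,1,n_d)`, and let `I₂ = ⟨Σ x_a² − 1, rank-one binomials⟩`. Then
`I₂ ∩ ℝ[x_a : a ∈ J] = {0}` (i.e. `J` is algebraically independent with respect to
`I₂`) and `|J| = Σᵢ nᵢ − d`. -/
theorem stmt_18 (d : ℕ) (hd : 0 < d) (n : Fin d → ℕ) (hn : ∀ i, 0 < n i)
    (c : (i : Fin d) → Fin (n i))
    (hc : c = fun i => if i = (⟨d - 1, Nat.sub_lt hd Nat.one_pos⟩ : Fin d) then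
      (⟨n i - 1, Nat.sub_lt (hn i) Nat.one_pos⟩ : Fin (n i)) else (⟨0, hn i⟩ : Fin (n i)))
    (J : Set ((i : Fin d) → Fin (n i)))
    (hJ : J = {a | {i : Fin d | a i ≠ (⟨0, hn i⟩ : Fin (n i))}.Subsingleton} \ {c})
    (I₂ : Ideal (MvPolynomial ((i : Fin d) → Fin (n i)) ℝ))
    (hI₂ : I₂ = Ideal.span
      ({(∑ a : (i : Fin d) → Fin (n i), (MvPolynomial.X a) ^ 2) - 1} ∪
       {p | ∃ a b : (i : Fin d) → Fin (n i),
        (∃ i, b i < a i) ∧ (∃ j, a j < b j) ∧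
        p = MvPolynomial.X a * MvPolynomial.X b -
            MvPolynomial.X (a ⊔ b) * MvPolynomial.X (a ⊓ b)})) :
    (∀ f ∈ I₂, f ∈ MvPolynomial.supported ℝ J → f = 0) ∧
    J.ncard = (∑ i, n i) - d := by
  set o : (i : Fin d) → Fin (n i) := fun i => ⟨0, hn i⟩
  have hcJ : c ∈ axisIndices o := by
    have hl : ∀ i, c i ≠ o i → i = ⟨d - 1, Nat.sub_lt hd Nat.one_pos⟩ := fun i hi =>
      by_contra fun h => hi (by simp [hc, h, o])
    exact fun i hi j hj => (hl i hi).trans (hl j hj).symm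
  have hJo : J = axisIndices o \ {c} := hJ
  have hI : I₂ ≤ rankOneSphereIdeal ℝ :=
    hI₂ ▸ Ideal.span_mono (union_subset_union_right _ fun p ⟨a, b, _, _, hp⟩ => ⟨a, b, hp⟩)
  refine ⟨fun f hf hfJ => ?_, ?_⟩
  · exact eq_zero_of_mem_supported_of_interior_nonempty
      (hJo ▸ interior_unitRankOneTensors_eqOn_diff_nonempty hcJ) hfJ
      fun z hz => eval_eq_zero_of_mem_rankOneSphereIdeal hz (hI hf)
  · rw [hJo, ncard_axisIndices_diff_singleton hcJ]
    simp only [Fintype.card_fin]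
    rw [Finset.sum_tsub_distrib _ fun i _ => hn i]
    simp
end

section
/- For 2×2 matrices, the ideal I₂ = ⟨x₁₁² + x₁₂² + x₂₁² + x₂₂² − 1, x₁₁x₂₂ − x₁₂x₂₁⟩ ⊆ ℝ[x₁₁,x₁₂,x₂₁,x₂₂] is a prime ideal, and it is real radical (equal to the vanishing ideal of its real variety, the set of rank-≤1 matrices of Frobenius norm 1). -/
/-!
With `u₁ = x₁₁ + x₂₂`, `v₁ = x₁₂ - x₂₁`, `u₂ = x₁₁ - x₂₂`, `v₂ = x₁₂ + x₂₁` the generators `g₁, g₂`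
of `I₂` satisfy `g₁ + 2 g₂ = u₁² + v₁² - 1` and `g₁ - 2 g₂ = u₂² + v₂² - 1`, so `ℝ[x] ⧸ I₂` is the
coordinate ring of the torus `S¹ × S¹`, obtained from `ℝ` by applying twice the extension
`D ↦ D[x][y] ⧸ (y² - (1 - x²))`. This extension preserves being a domain (`1 - x²` has a simple
root at `1`, so it is not a square in the fraction field of `D[x]`), which gives primality. It also
preserves the property that elements are determined by their values at real points (if `p + q y`
vanishes at `(a, ±√(1 - a²))` for all `|a| < 1`, then `p` and `q` vanish at infinitely many
points); for a quotient of `ℝ[x]` this property is exactly real radicality.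
-/

section
open Polynomial

namespace Polynomial

variable {R : Type*} [CommRing R]

theorem Monic.prime_of_irreducible_map {K : Type*} [Field K] {f : R[X]} (hf : f.Monic)
    {φ : R →+* K} (hφ : Function.Injective φ) (h : Irreducible (f.map φ)) : Prime f := by
  refine ⟨fun hf0 => h.ne_zero (by simp [hf0]), fun hu => h.not_isUnit (hu.map (mapRingHom φ)),
    fun a b hab => ?_⟩
  have hab' : f.map φ ∣ a.map φ * b.map φ := by
    rw [← Polynomial.map_mul]; exact Polynomial.map_dvd φ hab
  simpa only [map_dvd_map φ hφ hf] using h.prime.dvd_or_dvd hab'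

variable [IsDomain R]

theorem sq_ne_mul_sq_of_rootMultiplicity_eq_one {f p q : R[X]} {c : R}
    (hf : f.rootMultiplicity c = 1) (hq : q ≠ 0) : p ^ 2 ≠ f * q ^ 2 := by
  intro h
  have hf0 : f ≠ 0 := by rintro rfl; simp at hf
  have hp : p ≠ 0 := by rintro rfl; simp_all
  have := congrArg (rootMultiplicity c) h
  rw [sq, sq, rootMultiplicity_mul (by simp [hp]), rootMultiplicity_mul (by simp [hf0, hq]),
    rootMultiplicity_mul (by simp [hq]), hf] at this
  omega

theorem rootMultiplicity_one_sub_X_sq (h2 : (2 : R) ≠ 0) :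
    (1 - X ^ 2 : R[X]).rootMultiplicity 1 = 1 := by
  have hroot : ¬ (-(X + 1) : R[X]).IsRoot 1 := by
    rwa [IsRoot, eval_neg, eval_add, eval_X, eval_one, one_add_one_eq_two, neg_eq_zero]
  have hne : (-(X + 1) : R[X]) ≠ 0 := fun h => hroot (by rw [h, IsRoot, eval_zero])
  rw [show (1 - X ^ 2 : R[X]) = (X - C 1) * -(X + 1) by rw [map_one]; ring,
    rootMultiplicity_mul (mul_ne_zero (X_sub_C_ne_zero 1) hne),
    rootMultiplicity_X_sub_C_self, rootMultiplicity_eq_zero hroot]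

theorem prime_X_sq_sub_C {a : R} (ha : ∀ p q : R, q ≠ 0 → p ^ 2 ≠ a * q ^ 2) :
    Prime (X ^ 2 - C a) := by
  let φ := algebraMap R (FractionRing R)
  have hφ : Function.Injective φ := IsFractionRing.injective R _
  refine (monic_X_pow_sub_C a two_ne_zero).prime_of_irreducible_map hφ ?_
  rw [Polynomial.map_sub, Polynomial.map_pow, map_X, map_C]
  refine X_pow_sub_C_irreducible_of_prime Nat.prime_two fun b hb => ?_
  obtain ⟨p, q, hq, rfl⟩ := IsFractionRing.div_surjective (A := R) b
  have hq' : φ q ≠ 0 := (map_ne_zero_iff φ hφ).mpr (nonZeroDivisors.ne_zero hq)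
  refine ha p q (nonZeroDivisors.ne_zero hq) (hφ ?_)
  rw [div_pow, div_eq_iff (pow_ne_zero 2 hq')] at hb
  simpa using hb

end Polynomial

noncomputable def circlePolynomial (D : Type*) [CommRing D] : D[X][X] := X ^ 2 - C (1 - X ^ 2)

abbrev CircleRing (D : Type*) [CommRing D] := AdjoinRoot (circlePolynomial D)

section CirclePolynomial

variable {D : Type*} [CommRing D]

theorem monic_circlePolynomial : (circlePolynomial D).Monic :=
  monic_X_pow_sub_C _ two_ne_zero

theorem natDegree_circlePolynomial [Nontrivial D] : (circlePolynomial D).natDegree = 2 :=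
  natDegree_X_pow_sub_C

end CirclePolynomial

namespace CircleRing

variable {D : Type*} [CommRing D]

noncomputable def base : D →+* CircleRing D := (AdjoinRoot.of _).comp C

noncomputable def x : CircleRing D := AdjoinRoot.of _ X

noncomputable def y : CircleRing D := AdjoinRoot.root _

theorem x_sq_add_y_sq : (x : CircleRing D) ^ 2 + y ^ 2 = 1 := by
  have h : AdjoinRoot.mk (circlePolynomial D) (X ^ 2 - C (1 - X ^ 2)) = 0 := AdjoinRoot.mk_self
  simp only [map_sub, map_pow, map_one, AdjoinRoot.mk_X, AdjoinRoot.mk_C] at h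
  rw [x, y]
  linear_combination h

theorem isDomain [IsDomain D] (h2 : (2 : D) ≠ 0) : IsDomain (CircleRing D) :=
  AdjoinRoot.isDomain_of_prime <| prime_X_sq_sub_C fun _ _ hq =>
    sq_ne_mul_sq_of_rootMultiplicity_eq_one (rootMultiplicity_one_sub_X_sq h2) hq

theorem exists_eq_add_mul_y [Nontrivial D] (u : CircleRing D) :
    ∃ p q : D[X], u = AdjoinRoot.of _ p + AdjoinRoot.of _ q * y := by
  obtain ⟨s, rfl⟩ := AdjoinRoot.mk_surjective u
  have hr := natDegree_modByMonic_lt s monic_circlePolynomial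
    (ne_of_apply_ne natDegree (by simp [natDegree_circlePolynomial]))
  rw [natDegree_circlePolynomial, Nat.lt_succ_iff] at hr
  rw [← AdjoinRoot.mk_leftInverse monic_circlePolynomial (AdjoinRoot.mk _ s),
    AdjoinRoot.modByMonicHom_mk]
  generalize s %ₘ circlePolynomial D = r at hr ⊢
  refine ⟨r.coeff 0, r.coeff 1, ?_⟩
  conv_lhs => rw [eq_X_add_C_of_natDegree_le_one hr]
  rw [map_add, map_mul, AdjoinRoot.mk_C, AdjoinRoot.mk_C, AdjoinRoot.mk_X, y]
  ring

variable {Q : Type*} [CommRing Q]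

noncomputable def lift (φ : D →+* Q) (a b : Q) (h : a ^ 2 + b ^ 2 = 1) : CircleRing D →+* Q :=
  AdjoinRoot.lift (eval₂RingHom φ a) b <| by
    simp only [circlePolynomial, eval₂_sub, eval₂_X_pow, eval₂_C, coe_eval₂RingHom, eval₂_one,
      eval₂_X_pow]
    linear_combination h

variable (φ : D →+* Q) (a b : Q) (h : a ^ 2 + b ^ 2 = 1)

@[simp] theorem lift_of (p : D[X]) : lift φ a b h (AdjoinRoot.of _ p) = p.eval₂ φ a := by
  simp [lift]

@[simp] theorem lift_base (r : D) : lift φ a b h (base r) = φ r := by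
  simp [base]

@[simp] theorem lift_x : lift φ a b h x = a := by
  simp [x]

@[simp] theorem lift_y : lift φ a b h y = b := by
  rw [lift, y, AdjoinRoot.lift_root]

end CircleRing

def RealPointsSeparate (A : Type*) [CommRing A] : Prop :=
  ∀ u : A, (∀ χ : A →+* ℝ, χ u = 0) → u = 0

namespace RealPointsSeparate

variable {D : Type*} [CommRing D]

theorem real : RealPointsSeparate ℝ := fun _ h => h (RingHom.id ℝ)

theorem polynomial_eq_zero (hD : RealPointsSeparate D) {s : Set ℝ} (hs : s.Infinite) {p : D[X]}
    (hp : ∀ χ : D →+* ℝ, ∀ a ∈ s, p.eval₂ χ a = 0) : p = 0 := by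
  ext n
  refine hD _ fun χ => ?_
  have hmap : p.map χ = 0 :=
    eq_zero_of_infinite_isRoot _ (hs.mono fun a ha => by simpa [eval_map] using hp χ a ha)
  simpa using congrArg (coeff · n) hmap

theorem circleRing [Nontrivial D] (hD : RealPointsSeparate D) :
    RealPointsSeparate (CircleRing D) := by
  intro u hu
  obtain ⟨p, q, rfl⟩ := CircleRing.exists_eq_add_mul_y u
  have hvanish : ∀ χ : D →+* ℝ, ∀ a ∈ Set.Ioo (-1 : ℝ) 1, p.eval₂ χ a = 0 ∧ q.eval₂ χ a = 0 := by
    rintro χ a ⟨ha₁, ha₂⟩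
    set b := √(1 - a ^ 2)
    have hb : a ^ 2 + b ^ 2 = 1 := by rw [Real.sq_sqrt (by nlinarith)]; ring
    have hb₀ : b ≠ 0 := (Real.sqrt_pos.mpr (by nlinarith)).ne'
    have hplus := hu (CircleRing.lift χ a b hb)
    have hminus := hu (CircleRing.lift χ a (-b) (by rwa [neg_sq]))
    simp only [map_add, map_mul, CircleRing.lift_of, CircleRing.lift_y] at hplus hminus
    have hq : q.eval₂ χ a * b = 0 := by linarith
    exact ⟨by linarith, (mul_eq_zero.mp hq).resolve_right hb₀⟩
  have hs := Set.Ioo_infinite (show (-1 : ℝ) < 1 by norm_num)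
  rw [hD.polynomial_eq_zero hs fun χ a ha => (hvanish χ a ha).1,
    hD.polynomial_eq_zero hs fun χ a ha => (hvanish χ a ha).2]
  simp

end RealPointsSeparate

theorem MvPolynomial.vanishingIdeal_zeroLocus_ker {σ T : Type*} [CommRing T]
    (hT : RealPointsSeparate T) (Φ : MvPolynomial σ ℝ →+* T) :
    vanishingIdeal ℝ (zeroLocus ℝ (RingHom.ker Φ)) = RingHom.ker Φ := by
  refine le_antisymm (fun f hf => hT _ fun χ => ?_) (le_vanishingIdeal_zeroLocus _)
  have hχ : χ.comp Φ = (aeval fun i => χ (Φ (X i))).toRingHom :=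
    ringHom_ext (fun r => RingHom.congr_fun (Subsingleton.elim ((χ.comp Φ).comp C)
      ((aeval _).toRingHom.comp C)) r) fun _ => by simp
  refine (RingHom.congr_fun hχ f).trans (hf _ fun g hg => ?_)
  simpa [RingHom.mem_ker.mp hg] using (RingHom.congr_fun hχ g).symm

end

abbrev TorusRing := CircleRing (CircleRing ℝ)

namespace TorusRing

open CircleRing MvPolynomial

instance : IsDomain (CircleRing ℝ) := CircleRing.isDomain two_ne_zero

instance : IsDomain TorusRing :=
  CircleRing.isDomain (map_ofNat (base (D := ℝ)) 2 ▸
    ((IsUnit.mk0 (2 : ℝ) two_ne_zero).map base).ne_zero)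

theorem realPointsSeparate : RealPointsSeparate TorusRing :=
  RealPointsSeparate.real.circleRing.circleRing

noncomputable def rankOneSphereIdeal : Ideal (MvPolynomial (Fin 2 × Fin 2) ℝ) :=
  Ideal.span {X (0, 0) ^ 2 + X (0, 1) ^ 2 + X (1, 0) ^ 2 + X (1, 1) ^ 2 - 1,
    X (0, 0) * X (1, 1) - X (0, 1) * X (1, 0)}

-- `x ↦ ½ [[u₁ + u₂, v₁ + v₂], [v₂ - v₁, u₁ - u₂]]`, where `(u₁, v₁) = (base x, base y)` and
-- `(u₂, v₂) = (x, y)`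
noncomputable def toTorus : MvPolynomial (Fin 2 × Fin 2) ℝ →+* TorusRing :=
  eval₂Hom (base.comp base) fun ij => base (base (1 / 2)) *
    ![![base x + x, base y + y], ![y - base y, base x - x]] ij.1 ij.2

noncomputable def ofTorus : TorusRing →+* MvPolynomial (Fin 2 × Fin 2) ℝ ⧸ rankOneSphereIdeal :=
  let π := Ideal.Quotient.mk rankOneSphereIdeal
  lift (lift (π.comp C) (π (X (0, 0) + X (1, 1))) (π (X (0, 1) - X (1, 0))) (by
      rw [← map_pow, ← map_pow, ← map_add, ← map_one π, Ideal.Quotient.eq]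
      exact Ideal.mem_span_pair.mpr ⟨1, 2, by ring⟩))
    (π (X (0, 0) - X (1, 1))) (π (X (0, 1) + X (1, 0))) (by
      rw [← map_pow, ← map_pow, ← map_add, ← map_one π, Ideal.Quotient.eq]
      exact Ideal.mem_span_pair.mpr ⟨1, -2, by ring⟩)

theorem ofTorus_comp_toTorus :
    ofTorus.comp toTorus = Ideal.Quotient.mk rankOneSphereIdeal := by
  have half : Ideal.Quotient.mk rankOneSphereIdeal (C 2⁻¹) * 2 = 1 := by
    rw [← map_ofNat (Ideal.Quotient.mk _), ← map_ofNat C, ← map_mul, ← map_mul]; norm_num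
  refine ringHom_ext (fun r => by simp [ofTorus, toTorus]) fun ij => ?_
  fin_cases ij <;> simp [ofTorus, toTorus] <;> rw [← two_mul, ← mul_assoc, half, one_mul]

theorem ker_toTorus : RingHom.ker toTorus = rankOneSphereIdeal := by
  refine le_antisymm (fun f hf => ?_) ?_
  · rw [← Ideal.Quotient.eq_zero_iff_mem, ← ofTorus_comp_toTorus, RingHom.comp_apply,
      RingHom.mem_ker.mp hf, map_zero]
  · have half : base (base (1 / 2 : ℝ)) * 2 = (1 : TorusRing) := by
      rw [← map_ofNat (base.comp base) 2, ← RingHom.comp_apply, ← map_mul]; norm_num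
    have h₁ := x_sq_add_y_sq (D := ℝ)
    have h₂ := x_sq_add_y_sq (D := CircleRing ℝ)
    rw [rankOneSphereIdeal, Ideal.span_le, Set.pair_subset_iff]
    have hb₁ : base x ^ 2 + base y ^ 2 = (1 : TorusRing) := by simpa using congrArg base h₁
    simp only [SetLike.mem_coe, RingHom.mem_ker, toTorus, map_sub, map_add, map_mul, map_pow,
      map_one, eval₂Hom_X', Matrix.cons_val_zero, Matrix.cons_val_one]
    set h := base (base (1 / 2 : ℝ))
    constructor
    · linear_combination 2 * h ^ 2 * hb₁ + 2 * h ^ 2 * h₂ + (2 * h + 1) * half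
    · linear_combination h ^ 2 * hb₁ - h ^ 2 * h₂

end TorusRing

/-- For `2×2` matrices, `I₂ = ⟨x₁₁² + x₁₂² + x₂₁² + x₂₂² − 1, x₁₁x₂₂ − x₁₂x₂₁⟩` is a
prime ideal and is real radical: it equals the vanishing ideal of its real variety. -/
theorem stmt_19 (I₂ : Ideal (MvPolynomial (Fin 2 × Fin 2) ℝ))
    (hI₂ : I₂ = Ideal.span
      {(MvPolynomial.X (0, 0)) ^ 2 + (MvPolynomial.X (0, 1)) ^ 2 +
        (MvPolynomial.X (1, 0)) ^ 2 + (MvPolynomial.X (1, 1)) ^ 2 - 1,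
       MvPolynomial.X (0, 0) * MvPolynomial.X (1, 1) -
        MvPolynomial.X (0, 1) * MvPolynomial.X (1, 0)}) :
    I₂.IsPrime ∧ MvPolynomial.vanishingIdeal ℝ (MvPolynomial.zeroLocus ℝ I₂) = I₂ := by
  obtain rfl : I₂ = RingHom.ker TorusRing.toTorus := hI₂.trans TorusRing.ker_toTorus.symm
  exact ⟨RingHom.ker_isPrime _,
    MvPolynomial.vanishingIdeal_zeroLocus_ker TorusRing.realPointsSeparate _⟩
end
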